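/- arXiv:2410.23035 — 10 statements merged into one kernel-verified Lean document; each statement's English description precedes it below -/
import Mathlib

section
/- Let G be a group with finite symmetric generating set S containing the identity, and let H ≤ G be a subgroup of finite index. Then T = S^{2·diam_S(G/H)+1} ∩ H generates H, and the diameter of H with respect to T is at most diam_S(G) (when G is finite); more precisely every element of H expressible as a word of length m in S lies in T^m. -/
open Pointwise

/-- The diameter of the coset space `G/H` with respect to a generating set `S`. -/
noncomputable def cosetDiam {G : Type*} [Group G] (S : Set G) (H : Subgroup G) : ℕ :=
  sInf {n : ℕ | S ^ n * (H : Set G) = Set.univ}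

private lemma list_prod_mem_pow {G : Type*} [Group G] {S : Set G} :
    ∀ l : List G, (∀ x ∈ l, x ∈ S) → l.prod ∈ S ^ l.length := by
  intro l
  induction l with
  | nil => intro _; simp [Set.mem_one]
  | cons a l ih =>
      intro h
      rw [List.prod_cons, List.length_cons, pow_succ']
      exact Set.mul_mem_mul (h a (by simp)) (ih fun x hx => h x (by simp [hx]))

private lemma mem_pow_of_gen {G : Type*} [Group G] {S : Set G} (hSsymm : S⁻¹ = S)
    (hSgen : Subgroup.closure S = ⊤) (g : G) : ∃ n, g ∈ S ^ n := by
  have hg : g ∈ (Subgroup.closure S).toSubmonoid := by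
    rw [hSgen]; trivial
  rw [Subgroup.closure_toSubmonoid, hSsymm, Set.union_self] at hg
  obtain ⟨l, hl, hprod⟩ := Submonoid.exists_list_of_mem_closure hg
  exact ⟨l.length, hprod ▸ list_prod_mem_pow l hl⟩

/-- Quantitative Schreier generation: `T = S^{2 diam_S(G/H) + 1} + 1` generates `H`,
every element of `H` that is a word of length `m` in `S` lies in `T^m`, and in
particular if `G` has diameter `D` with respect to `S` (e.g. when `G` is finite)
then `H` has diameter at most `D` with respect to `T`. -/
theorem schreier_generating_set {G : Type*} [Group G] (S : Set G)
    (hSfin : S.Finite) (hSsymm : S⁻¹ = S) (hSone : (1 : G) ∈ S)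
    (hSgen : Subgroup.closure S = ⊤)
    (H : Subgroup G) (hH : H.FiniteIndex)
    (T : Set G) (hT : T = S ^ (2 * cosetDiam S H + 1) ∩ (H : Set G)) :
    Subgroup.closure T = H ∧
    (∀ m : ℕ, S ^ m ∩ (H : Set G) ⊆ T ^ m) ∧
    (∀ D : ℕ, S ^ D = (Set.univ : Set G) → (H : Set G) ⊆ T ^ D) := by
  classical
  set d := cosetDiam S H with hd_def
  -- the defining set of the infimum is nonempty
  haveI := hH
  haveI : Finite (G ⧸ H) := H.finite_quotient_of_finiteIndex
  have hnonempty : {n : ℕ | S ^ n * (H : Set G) = Set.univ}.Nonempty := by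
    have hexists : ∀ x : G ⧸ H, ∃ n : ℕ, ∃ u ∈ S ^ n, QuotientGroup.mk u = x := by
      intro x
      obtain ⟨n, hn⟩ := mem_pow_of_gen hSsymm hSgen (Quotient.out x)
      exact ⟨n, Quotient.out x, hn, QuotientGroup.out_eq' x⟩
    choose f hf using hexists
    haveI : Fintype (G ⧸ H) := Fintype.ofFinite _
    obtain ⟨N, hN⟩ : ∃ N, ∀ x : G ⧸ H, f x ≤ N :=
      ⟨Finset.univ.sup f, fun x => Finset.le_sup (Finset.mem_univ x)⟩
    refine ⟨N, Set.eq_univ_of_forall fun g => ?_⟩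
    obtain ⟨u, hu, hmk⟩ := hf (QuotientGroup.mk g)
    have huH : u⁻¹ * g ∈ H := QuotientGroup.eq.mp hmk
    exact ⟨u, Set.pow_subset_pow_right hSone (hN _) hu, u⁻¹ * g, huH, by group⟩
  have hd : S ^ d * (H : Set G) = Set.univ := Nat.sInf_mem hnonempty
  -- choose coset representatives in S^d, with 1 representing H
  have hspec : ∀ x : G ⧸ H, ∃ u, u ∈ S ^ d ∧ QuotientGroup.mk u = x := by
    intro x
    have : Quotient.out x ∈ S ^ d * (H : Set G) := hd ▸ Set.mem_univ _
    obtain ⟨u, hu, h, hh, huh⟩ := this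
    refine ⟨u, hu, ?_⟩
    rw [← QuotientGroup.out_eq' x, QuotientGroup.eq]
    have : u⁻¹ * Quotient.out x = h := by rw [← huh]; group
    rw [this]; exact hh
  set ψ : G ⧸ H → G := fun x => if x = ((1 : G) : G ⧸ H) then 1 else Classical.choose (hspec x)
    with hψ_def
  have hψ_mem : ∀ x, ψ x ∈ S ^ d := by
    intro x
    by_cases hx : x = ((1 : G) : G ⧸ H)
    · simp only [hψ_def, hx, if_pos rfl]; exact Set.one_mem_pow hSone
    · simp only [hψ_def, if_neg hx]; exact (Classical.choose_spec (hspec x)).1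
  have hψ_mk : ∀ x, QuotientGroup.mk (ψ x) = x := by
    intro x
    by_cases hx : x = ((1 : G) : G ⧸ H)
    · simp [hψ_def, hx]
    · simp only [hψ_def, if_neg hx]; exact (Classical.choose_spec (hspec x)).2
  have hψ_one : ψ ((1 : G) : G ⧸ H) = 1 := by simp [hψ_def]
  have hψ_H : ∀ g : G, (ψ (QuotientGroup.mk g))⁻¹ * g ∈ H := by
    intro g
    exact QuotientGroup.eq.mp (hψ_mk (QuotientGroup.mk g))
  -- T is a subset of H
  have hTH : T ⊆ (H : Set G) := by rw [hT]; exact Set.inter_subset_right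
  -- the key induction
  have hkey : ∀ m : ℕ, ∀ g ∈ S ^ m, (ψ (QuotientGroup.mk g))⁻¹ * g ∈ T ^ m := by
    intro m
    induction m with
    | zero =>
        intro g hg
        rw [pow_zero] at hg ⊢
        rw [Set.mem_one] at hg
        subst hg
        rw [hψ_one]
        simp [Set.mem_one]
    | succ m ih =>
        intro g hg
        rw [pow_succ'] at hg
        obtain ⟨s, hs, g', hg', rfl⟩ := hg
        have ih' := ih g' hg'
        set u := ψ (QuotientGroup.mk (s * g')) with hu_def
        set u' := ψ (QuotientGroup.mk g') with hu'_def
        have htT : u⁻¹ * s * u' ∈ T := by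
          rw [hT]
          constructor
          · -- membership in S ^ (2d+1)
            have h1 : u⁻¹ ∈ S ^ d := by
              rw [← hSsymm, inv_pow, Set.mem_inv]
              simpa using hψ_mem _
            have : u⁻¹ * s * u' ∈ S ^ d * S ^ 1 * S ^ d :=
              Set.mul_mem_mul (Set.mul_mem_mul h1 (by rwa [pow_one])) (hψ_mem _)
            rwa [← pow_add, ← pow_add, show d + 1 + d = 2 * d + 1 by ring] at this
          · -- membership in H
            have h1 : u⁻¹ * (s * g') ∈ H := hψ_H (s * g')
            have h2 : u'⁻¹ * g' ∈ H := hψ_H g'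
            have : u⁻¹ * s * u' = (u⁻¹ * (s * g')) * (u'⁻¹ * g')⁻¹ := by group
            rw [this]
            exact H.mul_mem h1 (H.inv_mem h2)
        have : (ψ (QuotientGroup.mk (s * g')))⁻¹ * (s * g')
            = (u⁻¹ * s * u') * (u'⁻¹ * g') := by rw [← hu_def]; group
        rw [this, pow_succ']
        exact Set.mul_mem_mul htT ih'
  have hclaim2 : ∀ m : ℕ, S ^ m ∩ (H : Set G) ⊆ T ^ m := by
    intro m g hg
    obtain ⟨hgS, hgH⟩ := hg
    have hmk : QuotientGroup.mk g = ((1 : G) : G ⧸ H) := by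
      rw [QuotientGroup.eq]
      simpa using H.inv_mem hgH
    have := hkey m g hgS
    rwa [hmk, hψ_one, inv_one, one_mul] at this
  refine ⟨?_, hclaim2, ?_⟩
  · -- closure T = H
    apply le_antisymm
    · rw [Subgroup.closure_le]
      exact hTH
    · intro h hh
      obtain ⟨m, hm⟩ := mem_pow_of_gen hSsymm hSgen h
      have : h ∈ T ^ m := hclaim2 m ⟨hm, hh⟩
      -- T^m ⊆ closure T
      have hsub : ∀ k : ℕ, T ^ k ⊆ (Subgroup.closure T : Set G) := by
        intro k
        induction k with
        | zero =>
            rw [pow_zero]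
            intro x hx
            rw [Set.mem_one] at hx
            subst hx
            exact (Subgroup.closure T).one_mem
        | succ k ihk =>
            rw [pow_succ]
            rintro x ⟨a, ha, b, hb, rfl⟩
            exact (Subgroup.closure T).mul_mem (ihk ha) (Subgroup.subset_closure hb)
      exact hsub m this
  · intro D hD h hh
    exact hclaim2 D ⟨hD ▸ Set.mem_univ h, hh⟩
end

section
/- Let H be the integral Heisenberg group, generated by x, y (elementary unitriangular matrices) with z = [x,y] central. For each n ∈ ℕ, the set H_n = {x^{na} y^{nb} z^{n²c} : a,b,c ∈ ℤ} (i.e. matrices with top-right entry in n²ℤ and other off-diagonal entries in nℤ) is a subgroup of H of index n⁴, and diam_S(H/H_n) ≤ 10n for S = {x^{±1}, y^{±1}, z^{±1}, 1}. -/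
open Pointwise

/-- The integral Heisenberg group: `⟨a, b, c⟩` represents the upper unitriangular
matrix with entry `a` in position (1,2), `b` in position (2,3) and `c` in
position (1,3). -/
@[ext]
structure Heis where
  a : ℤ
  b : ℤ
  c : ℤ

namespace Heis

instance : Mul Heis := ⟨fun p q => ⟨p.a + q.a, p.b + q.b, p.c + q.c + p.a * q.b⟩⟩
instance : One Heis := ⟨⟨0, 0, 0⟩⟩
instance : Inv Heis := ⟨fun p => ⟨-p.a, -p.b, p.a * p.b - p.c⟩⟩

@[simp] lemma mul_a (p q : Heis) : (p * q).a = p.a + q.a := rfl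
@[simp] lemma mul_b (p q : Heis) : (p * q).b = p.b + q.b := rfl
@[simp] lemma mul_c (p q : Heis) : (p * q).c = p.c + q.c + p.a * q.b := rfl
@[simp] lemma one_a : (1 : Heis).a = 0 := rfl
@[simp] lemma one_b : (1 : Heis).b = 0 := rfl
@[simp] lemma one_c : (1 : Heis).c = 0 := rfl
@[simp] lemma inv_a (p : Heis) : p⁻¹.a = -p.a := rfl
@[simp] lemma inv_b (p : Heis) : p⁻¹.b = -p.b := rfl
@[simp] lemma inv_c (p : Heis) : p⁻¹.c = p.a * p.b - p.c := rfl

instance : Group Heis where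
  mul_assoc p q r := by ext <;> simp <;> ring
  one_mul p := by ext <;> simp
  mul_one p := by ext <;> simp
  inv_mul_cancel p := by ext <;> simp <;> ring

/-- The generator `x` (elementary matrix with 1 in position (1,2)). -/
def x : Heis := ⟨1, 0, 0⟩
/-- The generator `y` (elementary matrix with 1 in position (2,3)). -/
def y : Heis := ⟨0, 1, 0⟩
/-- The central element `z = [x,y]` (elementary matrix with 1 in position (1,3)). -/
def z : Heis := ⟨0, 0, 1⟩

end Heis

namespace HeisAux

open Heis

lemma x_pow (k : ℕ) : x ^ k = ⟨(k : ℤ), 0, 0⟩ := by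
  induction k with
  | zero => rfl
  | succ m ih => rw [pow_succ, ih]; ext <;> simp [x] <;> push_cast <;> ring

lemma y_pow (k : ℕ) : y ^ k = ⟨0, (k : ℤ), 0⟩ := by
  induction k with
  | zero => rfl
  | succ m ih => rw [pow_succ, ih]; ext <;> simp [y] <;> push_cast <;> ring

lemma z_pow (k : ℕ) : z ^ k = ⟨0, 0, (k : ℤ)⟩ := by
  induction k with
  | zero => rfl
  | succ m ih => rw [pow_succ, ih]; ext <;> simp [z] <;> push_cast <;> ring

lemma x_zpow (k : ℤ) : x ^ k = ⟨k, 0, 0⟩ := by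
  cases k with
  | ofNat m => simpa using x_pow m
  | negSucc m =>
      rw [zpow_negSucc, x_pow]
      ext <;> simp [Int.negSucc_eq] <;> ring

lemma y_zpow (k : ℤ) : y ^ k = ⟨0, k, 0⟩ := by
  cases k with
  | ofNat m => simpa using y_pow m
  | negSucc m =>
      rw [zpow_negSucc, y_pow]
      ext <;> simp [Int.negSucc_eq] <;> ring

lemma z_zpow (k : ℤ) : z ^ k = ⟨0, 0, k⟩ := by
  cases k with
  | ofNat m => simpa using z_pow m
  | negSucc m =>
      rw [zpow_negSucc, z_pow]
      ext <;> simp [Int.negSucc_eq] <;> ring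

/-- The subgroup `H_n`. -/
def Hsub (n : ℕ) : Subgroup Heis where
  carrier := {g : Heis | (n : ℤ) ∣ g.a ∧ (n : ℤ) ∣ g.b ∧ ((n : ℤ)) ^ 2 ∣ g.c}
  one_mem' := ⟨dvd_zero _, dvd_zero _, dvd_zero _⟩
  mul_mem' := by
    rintro p q ⟨ha, hb, hc⟩ ⟨ha', hb', hc'⟩
    refine ⟨dvd_add ha ha', dvd_add hb hb', ?_⟩
    have : ((n : ℤ)) ^ 2 ∣ p.a * q.b := by rw [sq]; exact mul_dvd_mul ha hb'
    exact dvd_add (dvd_add hc hc') this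
  inv_mem' := by
    rintro p ⟨ha, hb, hc⟩
    refine ⟨by simpa using ha.neg_right, by simpa using hb.neg_right, ?_⟩
    have : ((n : ℤ)) ^ 2 ∣ p.a * p.b := by rw [sq]; exact mul_dvd_mul ha hb
    simpa using dvd_sub this hc

lemma mem_Hsub {n : ℕ} {g : Heis} :
    g ∈ Hsub n ↔ (n : ℤ) ∣ g.a ∧ (n : ℤ) ∣ g.b ∧ ((n : ℤ)) ^ 2 ∣ g.c := Iff.rfl

/-- The coset invariant. -/
def rquo (n : ℕ) (g : Heis) : ZMod n × ZMod n × ZMod (n ^ 2) :=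
  ((g.a : ZMod n), (g.b : ZMod n),
    ((g.c - g.a % (n : ℤ) * (g.b - g.b % (n : ℤ)) : ℤ) : ZMod (n ^ 2)))

lemma mem_Hsub_iff (n : ℕ) (g g' : Heis) :
    g⁻¹ * g' ∈ Hsub n ↔ ((n : ℤ) ∣ g'.a - g.a ∧ (n : ℤ) ∣ g'.b - g.b ∧
      ((n : ℤ)) ^ 2 ∣ g'.c - g.c - g.a * (g'.b - g.b)) := by
  have Ea : (g⁻¹ * g').a = g'.a - g.a := by simp; ring
  have Eb : (g⁻¹ * g').b = g'.b - g.b := by simp; ring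
  have Ec : (g⁻¹ * g').c = g'.c - g.c - g.a * (g'.b - g.b) := by simp; ring
  rw [mem_Hsub, Ea, Eb, Ec]

lemma rquo_eq_iff (n : ℕ) (g g' : Heis) :
    rquo n g = rquo n g' ↔ g⁻¹ * g' ∈ Hsub n := by
  rw [mem_Hsub_iff]
  simp only [rquo, Prod.mk.injEq, ZMod.intCast_eq_intCast_iff, Int.modEq_iff_dvd,
    Nat.cast_pow]
  constructor
  · rintro ⟨h1, h2, h3⟩
    have e1 : g.a % (n : ℤ) = g'.a % (n : ℤ) := Int.modEq_iff_dvd.mpr h1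
    have e2 : g.b % (n : ℤ) = g'.b % (n : ℤ) := Int.modEq_iff_dvd.mpr h2
    refine ⟨h1, h2, ?_⟩
    have hA : (n : ℤ) ∣ g.a - g.a % (n : ℤ) := ⟨g.a / n, by rw [Int.emod_def]; ring⟩
    have hB : ((n : ℤ)) ^ 2 ∣ (g.a - g.a % (n : ℤ)) * (g'.b - g.b) := by
      rw [sq]; exact mul_dvd_mul hA h2
    have hgoal : g'.c - g.c - g.a * (g'.b - g.b) =
        (g'.c - g'.a % (n : ℤ) * (g'.b - g'.b % (n : ℤ)) -
          (g.c - g.a % (n : ℤ) * (g.b - g.b % (n : ℤ)))) -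
          (g.a - g.a % (n : ℤ)) * (g'.b - g.b) := by
      rw [← e1, ← e2]; ring
    rw [hgoal]
    exact dvd_sub h3 hB
  · rintro ⟨h1, h2, h3⟩
    have e1 : g.a % (n : ℤ) = g'.a % (n : ℤ) := Int.modEq_iff_dvd.mpr h1
    have e2 : g.b % (n : ℤ) = g'.b % (n : ℤ) := Int.modEq_iff_dvd.mpr h2
    refine ⟨h1, h2, ?_⟩
    have hA : (n : ℤ) ∣ g.a - g.a % (n : ℤ) := ⟨g.a / n, by rw [Int.emod_def]; ring⟩
    have hB : ((n : ℤ)) ^ 2 ∣ (g.a - g.a % (n : ℤ)) * (g'.b - g.b) := by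
      rw [sq]; exact mul_dvd_mul hA h2
    have hgoal : g'.c - g'.a % (n : ℤ) * (g'.b - g'.b % (n : ℤ)) -
          (g.c - g.a % (n : ℤ) * (g.b - g.b % (n : ℤ))) =
        (g'.c - g.c - g.a * (g'.b - g.b)) + (g.a - g.a % (n : ℤ)) * (g'.b - g.b) := by
      rw [← e1, ← e2]; ring
    rw [hgoal]
    exact dvd_add h3 hB

lemma rquo_surjective (n : ℕ) (hn : 0 < n) : Function.Surjective (rquo n) := by
  haveI : NeZero n := ⟨hn.ne'⟩
  haveI : NeZero (n ^ 2) := ⟨pow_ne_zero _ hn.ne'⟩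
  rintro ⟨α, β, γ⟩
  refine ⟨⟨(α.val : ℤ), (β.val : ℤ), (γ.val : ℤ)⟩, ?_⟩
  have ha : ((α.val : ℤ)) % (n : ℤ) = (α.val : ℤ) :=
    Int.emod_eq_of_lt (by positivity) (by exact_mod_cast α.val_lt)
  have hb : ((β.val : ℤ)) % (n : ℤ) = (β.val : ℤ) :=
    Int.emod_eq_of_lt (by positivity) (by exact_mod_cast β.val_lt)
  simp only [rquo, ha, hb, sub_self, mul_zero, sub_zero]
  refine Prod.ext ?_ (Prod.ext ?_ ?_)
  · simp [ZMod.natCast_val, ZMod.cast_id]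
  · simp [ZMod.natCast_val, ZMod.cast_id]
  · simp [ZMod.natCast_val, ZMod.cast_id]

lemma index_Hsub (n : ℕ) (hn : 0 < n) : (Hsub n).index = n ^ 4 := by
  haveI : NeZero n := ⟨hn.ne'⟩
  have key : ∀ (a b : Heis), QuotientGroup.leftRel (Hsub n) a b → rquo n a = rquo n b :=
    fun a b h => (rquo_eq_iff n a b).mpr (QuotientGroup.leftRel_apply.mp h)
  let F : Heis ⧸ Hsub n → ZMod n × ZMod n × ZMod (n ^ 2) :=
    Quotient.lift (rquo n) key
  have hbij : Function.Bijective F := by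
    constructor
    · intro q q'
      induction q using Quotient.inductionOn
      induction q' using Quotient.inductionOn
      intro h
      exact Quotient.sound (QuotientGroup.leftRel_apply.mpr ((rquo_eq_iff n _ _).mp h))
    · intro t
      obtain ⟨g, hg⟩ := rquo_surjective n hn t
      exact ⟨Quotient.mk _ g, hg⟩
  have hcard : Nat.card (Heis ⧸ Hsub n) = Nat.card (ZMod n × ZMod n × ZMod (n ^ 2)) :=
    Nat.card_congr (Equiv.ofBijective F hbij)
  show Nat.card (Heis ⧸ Hsub n) = n ^ 4
  rw [hcard]
  simp only [Nat.card_prod, Nat.card_zmod]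
  ring

section Diam

lemma zpow_mem_pow {S : Set Heis} {s : Heis} (hs : s ∈ S) (hs' : s⁻¹ ∈ S) (k : ℤ) :
    s ^ k ∈ S ^ k.natAbs := by
  cases k with
  | ofNat m => simpa using Set.pow_mem_pow hs (n := m)
  | negSucc m =>
      rw [zpow_negSucc, ← inv_pow]
      simpa using Set.pow_mem_pow hs' (n := m + 1)

lemma covers (n : ℕ) (hn : 0 < n) :
    ({Heis.x, Heis.x⁻¹, Heis.y, Heis.y⁻¹, Heis.z, Heis.z⁻¹, 1} : Set Heis) ^ (10 * n) *
      ((Hsub n : Subgroup Heis) : Set Heis) = Set.univ := by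
  set S : Set Heis := {Heis.x, Heis.x⁻¹, Heis.y, Heis.y⁻¹, Heis.z, Heis.z⁻¹, 1} with hS
  have hx : Heis.x ∈ S := by rw [hS]; simp
  have hx' : Heis.x⁻¹ ∈ S := by rw [hS]; simp
  have hy : Heis.y ∈ S := by rw [hS]; simp
  have hy' : Heis.y⁻¹ ∈ S := by rw [hS]; simp
  have hz : Heis.z ∈ S := by rw [hS]; simp
  have hz' : Heis.z⁻¹ ∈ S := by rw [hS]; simp
  have h1 : (1 : Heis) ∈ S := by rw [hS]; simp
  apply Set.eq_univ_of_forall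
  intro g
  set N : ℤ := (n : ℤ) with hN
  have hN0 : 0 < N := by rw [hN]; exact_mod_cast hn
  set ra : ℤ := g.a % N with hra
  set rb : ℤ := g.b % N with hrb
  set X : ℤ := g.c - ra * g.b with hX
  set c' : ℤ := X % (N ^ 2) with hc'
  set q : ℤ := c' / N with hq
  set r : ℤ := c' % N with hr
  have hra0 : 0 ≤ ra := Int.emod_nonneg _ hN0.ne'
  have hraN : ra < N := Int.emod_lt_of_pos _ hN0
  have hrb0 : 0 ≤ rb := Int.emod_nonneg _ hN0.ne'
  have hrbN : rb < N := Int.emod_lt_of_pos _ hN0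
  have hc'0 : 0 ≤ c' := Int.emod_nonneg _ (by positivity)
  have hc'N : c' < N ^ 2 := Int.emod_lt_of_pos _ (by positivity)
  have hr0 : 0 ≤ r := Int.emod_nonneg _ hN0.ne'
  have hrN : r < N := Int.emod_lt_of_pos _ hN0
  have hq0 : 0 ≤ q := Int.ediv_nonneg hc'0 hN0.le
  have hqN : q < N := Int.ediv_lt_of_lt_mul hN0 (by rw [← sq]; exact hc'N)
  -- the word
  set w : Heis := Heis.x ^ ra * Heis.y ^ rb *
      (Heis.x ^ q * Heis.y ^ N * Heis.x ^ (-q) * Heis.y ^ (-N)) * Heis.z ^ r with hw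
  have hw_eq : w = ⟨ra, rb, ra * rb + (q * N + r)⟩ := by
    rw [hw, x_zpow, y_zpow, x_zpow, y_zpow, x_zpow, y_zpow, z_zpow]
    ext <;> simp <;> ring
  have hw_mem : w ∈ S ^ (10 * n) := by
    have m1 : Heis.x ^ ra ∈ S ^ ra.natAbs := zpow_mem_pow hx hx' ra
    have m2 : Heis.y ^ rb ∈ S ^ rb.natAbs := zpow_mem_pow hy hy' rb
    have m3 : Heis.x ^ q ∈ S ^ q.natAbs := zpow_mem_pow hx hx' q
    have m4 : Heis.y ^ N ∈ S ^ N.natAbs := zpow_mem_pow hy hy' N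
    have m5 : Heis.x ^ (-q) ∈ S ^ (-q).natAbs := zpow_mem_pow hx hx' (-q)
    have m6 : Heis.y ^ (-N) ∈ S ^ (-N).natAbs := zpow_mem_pow hy hy' (-N)
    have m7 : Heis.z ^ r ∈ S ^ r.natAbs := zpow_mem_pow hz hz' r
    have prod_mem : w ∈ S ^ (ra.natAbs + rb.natAbs +
        (q.natAbs + N.natAbs + (-q).natAbs + (-N).natAbs) + r.natAbs) := by
      rw [hw, pow_add, pow_add, pow_add, pow_add, pow_add, pow_add]
      exact Set.mul_mem_mul (Set.mul_mem_mul (Set.mul_mem_mul m1 m2)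
        (Set.mul_mem_mul (Set.mul_mem_mul (Set.mul_mem_mul m3 m4) m5) m6)) m7
    refine Set.pow_subset_pow_right h1 ?_ prod_mem
    have hNabs : N.natAbs = n := by rw [hN]; exact Int.natAbs_natCast n
    omega
  have hmem : w⁻¹ * g ∈ Hsub n := by
    rw [mem_Hsub]
    refine ⟨?_, ?_, ?_⟩
    · rw [hw_eq]
      simp only [mul_a, inv_a]
      exact ⟨g.a / N, by rw [hra, Int.emod_def]; ring⟩
    · rw [hw_eq]
      simp only [mul_b, inv_b]
      exact ⟨g.b / N, by rw [hrb, Int.emod_def]; ring⟩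
    · refine ⟨X / N ^ 2, ?_⟩
      have hqr : q * N + r = c' := by rw [hq, hr]; linarith [Int.mul_ediv_add_emod c' N]
      have hXc : X - c' = N ^ 2 * (X / N ^ 2) := by rw [hc', Int.emod_def]; ring
      rw [hw_eq]
      simp only [mul_c, inv_c, mul_a, mul_b, inv_a, inv_b]
      rw [← hXc, ← hqr, hX]
      ring
  have hg : g = w * (w⁻¹ * g) := by group
  exact hg ▸ Set.mul_mem_mul hw_mem hmem

end Diam

end HeisAux

/-- For each `n`, the set of Heisenberg matrices whose top-right entry lies in `n²ℤ`
and whose other off-diagonal entries lie in `nℤ` (i.e. `{x^{na} y^{nb} z^{n²c}}`)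
is a subgroup of index `n⁴` whose coset space has diameter at most `10 n`. -/
theorem heisenberg_small_coset_spaces (n : ℕ) (hn : 0 < n) :
    ∃ Hn : Subgroup Heis,
      (Hn : Set Heis) =
        {g : Heis | (n : ℤ) ∣ g.a ∧ (n : ℤ) ∣ g.b ∧ ((n : ℤ)) ^ 2 ∣ g.c} ∧
      Hn.index = n ^ 4 ∧
      cosetDiam ({Heis.x, Heis.x⁻¹, Heis.y, Heis.y⁻¹, Heis.z, Heis.z⁻¹, 1} : Set Heis) Hn
        ≤ 10 * n := by
  refine ⟨HeisAux.Hsub n, rfl, HeisAux.index_Hsub n hn, Nat.sInf_le (HeisAux.covers n hn)⟩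
end

section
/- Let H be the integral Heisenberg group with generating set S = {x^{±1}, y^{±1}, z^{±1}, 1}, and for each prime p let K_p be the subgroup of matrices congruent to the identity mod p (entries above the diagonal in pℤ). Then K_p is normal in H, [H:K_p] = p³, and diam_S(H/K_p) ≤ 3p. -/
open Pointwise

section Work
open Heis

private lemma heis_x_pow (n : ℕ) : x ^ n = ⟨n, 0, 0⟩ := by
  induction n with
  | zero => rfl
  | succ n ih => rw [pow_succ, ih]; ext <;> simp [x] <;> push_cast <;> ring

private lemma heis_y_pow (n : ℕ) : y ^ n = ⟨0, n, 0⟩ := by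
  induction n with
  | zero => rfl
  | succ n ih => rw [pow_succ, ih]; ext <;> simp [y] <;> push_cast <;> ring

private lemma heis_z_pow (n : ℕ) : z ^ n = ⟨0, 0, n⟩ := by
  induction n with
  | zero => rfl
  | succ n ih => rw [pow_succ, ih]; ext <;> simp [z] <;> push_cast <;> ring

end Work


/-- For each prime `p`, the set of Heisenberg matrices congruent to the identity
mod `p` is a normal subgroup of index `p³` whose coset space has diameter at most
`3 p`. -/
theorem heisenberg_small_quotients (p : ℕ) (hp : p.Prime) :
    ∃ Kp : Subgroup Heis,
      (Kp : Set Heis) = {g : Heis | (p : ℤ) ∣ g.a ∧ (p : ℤ) ∣ g.b ∧ (p : ℤ) ∣ g.c} ∧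
      Kp.Normal ∧
      Kp.index = p ^ 3 ∧
      cosetDiam ({Heis.x, Heis.x⁻¹, Heis.y, Heis.y⁻¹, Heis.z, Heis.z⁻¹, 1} : Set Heis) Kp
        ≤ 3 * p := by
  haveI : NeZero p := ⟨hp.ne_zero⟩
  have hp0 : (0:ℤ) < (p:ℤ) := by exact_mod_cast hp.pos
  set Kp : Subgroup Heis :=
    { carrier := {g : Heis | (p : ℤ) ∣ g.a ∧ (p : ℤ) ∣ g.b ∧ (p : ℤ) ∣ g.c}
      mul_mem' := by
        rintro g h ⟨ha, hb, hc⟩ ⟨ha', hb', hc'⟩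
        exact ⟨by simpa using dvd_add ha ha', by simpa using dvd_add hb hb',
          by simpa using dvd_add (dvd_add hc hc') (ha.mul_right _)⟩
      one_mem' := ⟨dvd_zero _, dvd_zero _, dvd_zero _⟩
      inv_mem' := by
        rintro g ⟨ha, hb, hc⟩
        exact ⟨ha.neg_right, hb.neg_right, dvd_sub (ha.mul_right _) hc⟩ } with hKp
  have memKp : ∀ g : Heis, g ∈ Kp ↔ (p : ℤ) ∣ g.a ∧ (p : ℤ) ∣ g.b ∧ (p : ℤ) ∣ g.c :=
    fun g => Iff.rfl
  refine ⟨Kp, rfl, ?_, ?_, ?_⟩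
  · constructor
    rintro n ⟨ha, hb, hc⟩ g
    refine ⟨by simpa using ha, by simpa using hb, ?_⟩
    have : (g * n * g⁻¹).c = n.c + g.a * n.b - n.a * g.b := by simp; ring
    rw [this]
    exact dvd_sub (dvd_add hc (hb.mul_left _)) (ha.mul_right _)
  · -- index
    have key : ∀ g h : Heis, g⁻¹ * h ∈ Kp ↔
        ((g.a : ZMod p) = h.a ∧ (g.b : ZMod p) = h.b ∧ (g.c : ZMod p) = h.c) := by
      intro g h
      rw [memKp]
      simp only [Heis.mul_a, Heis.mul_b, Heis.mul_c, Heis.inv_a, Heis.inv_b, Heis.inv_c]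
      rw [← ZMod.intCast_zmod_eq_zero_iff_dvd, ← ZMod.intCast_zmod_eq_zero_iff_dvd,
        ← ZMod.intCast_zmod_eq_zero_iff_dvd]
      push_cast
      constructor
      · rintro ⟨h1, h2, h3⟩
        have e1 : (g.a : ZMod p) = h.a := by linear_combination -h1
        have e2 : (g.b : ZMod p) = h.b := by linear_combination -h2
        refine ⟨e1, e2, ?_⟩
        linear_combination -h3 + (g.a : ZMod p) * e2
      · rintro ⟨e1, e2, e3⟩
        refine ⟨by linear_combination -e1, by linear_combination -e2, ?_⟩
        linear_combination -e3 + (g.a : ZMod p) * e2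
    have hf : Function.Bijective (fun q : Heis ⧸ Kp =>
        Quotient.liftOn' q (fun g => ((g.a : ZMod p), (g.b : ZMod p), (g.c : ZMod p)))
          (by
            intro g h hgh
            rw [QuotientGroup.leftRel_apply] at hgh
            obtain ⟨e1, e2, e3⟩ := (key g h).1 hgh
            simp [e1, e2, e3])) := by
      constructor
      · rintro ⟨g⟩ ⟨h⟩ heq
        have e1 : (g.a : ZMod p) = h.a := congrArg Prod.fst heq
        have e2 : (g.b : ZMod p) = h.b := congrArg (fun t => t.2.1) heq
        have e3 : (g.c : ZMod p) = h.c := congrArg (fun t => t.2.2) heq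
        exact Quotient.sound' (QuotientGroup.leftRel_apply.2 ((key g h).2 ⟨e1, e2, e3⟩))
      · rintro ⟨a, b, c⟩
        obtain ⟨a', rfl⟩ := ZMod.intCast_surjective a
        obtain ⟨b', rfl⟩ := ZMod.intCast_surjective b
        obtain ⟨c', rfl⟩ := ZMod.intCast_surjective c
        exact ⟨QuotientGroup.mk ⟨a', b', c'⟩, rfl⟩
    have := Nat.card_eq_of_bijective _ hf
    rw [Subgroup.index, this]
    simp [Nat.card_prod, Nat.card_zmod]
    ring
  · -- diameter
    set S : Set Heis := {Heis.x, Heis.x⁻¹, Heis.y, Heis.y⁻¹, Heis.z, Heis.z⁻¹, 1} with hS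
    have h1S : (1 : Heis) ∈ S := by simp [hS]
    have hxS : Heis.x ∈ S := by simp [hS]
    have hyS : Heis.y ∈ S := by simp [hS]
    have hzS : Heis.z ∈ S := by simp [hS]
    have hmem : S ^ (3 * p) * (Kp : Set Heis) = Set.univ := by
      refine Set.eq_univ_of_forall fun g => ?_
      set a : ℤ := g.a % (p : ℤ) with ha
      set b : ℤ := g.b % (p : ℤ) with hb
      set c : ℤ := (g.c - a * b) % (p : ℤ) with hc
      have ha0 : 0 ≤ a := Int.emod_nonneg _ (by positivity)
      have hb0 : 0 ≤ b := Int.emod_nonneg _ (by positivity)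
      have hc0 : 0 ≤ c := Int.emod_nonneg _ (by positivity)
      have hap : a < p := Int.emod_lt_of_pos _ hp0
      have hbp : b < p := Int.emod_lt_of_pos _ hp0
      have hcp : c < p := Int.emod_lt_of_pos _ hp0
      have hda : (p:ℤ) ∣ g.a - a := Int.dvd_self_sub_of_emod_eq rfl
      have hdb : (p:ℤ) ∣ g.b - b := Int.dvd_self_sub_of_emod_eq rfl
      have hdc : (p:ℤ) ∣ (g.c - a * b) - c := Int.dvd_self_sub_of_emod_eq rfl
      set A := a.toNat with hA
      set B := b.toNat with hB
      set C := c.toNat with hC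
      have hAa : (A : ℤ) = a := Int.toNat_of_nonneg ha0
      have hBb : (B : ℤ) = b := Int.toNat_of_nonneg hb0
      have hCc : (C : ℤ) = c := Int.toNat_of_nonneg hc0
      set r : Heis := Heis.x ^ A * Heis.y ^ B * Heis.z ^ C with hr
      have hrval : r = ⟨a, b, a * b + c⟩ := by
        rw [hr, heis_x_pow, heis_y_pow, heis_z_pow]
        ext <;> simp [hAa, hBb, hCc]
      have hrS : r ∈ S ^ (3 * p) := by
        have : r ∈ S ^ (A + B + C) := by
          rw [pow_add, pow_add]
          exact Set.mul_mem_mul (Set.mul_mem_mul (Set.pow_mem_pow hxS)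
            (Set.pow_mem_pow hyS)) (Set.pow_mem_pow hzS)
        refine Set.pow_subset_pow_right h1S ?_ this
        have : (A : ℤ) < p ∧ (B : ℤ) < p ∧ (C : ℤ) < p := by
          rw [hAa, hBb, hCc]; exact ⟨hap, hbp, hcp⟩
        omega
      have hrk : r⁻¹ * g ∈ Kp := by
        rw [memKp]
        rw [hrval]
        refine ⟨by simpa [neg_add_eq_sub] using hda, by simpa [neg_add_eq_sub] using hdb, ?_⟩
        have expand : ((⟨a, b, a*b+c⟩ : Heis)⁻¹ * g).c
            = ((g.c - a * b) - c) - a * (g.b - b) := by simp; ring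
        rw [expand]
        exact dvd_sub hdc (hdb.mul_left a)
      rw [Set.mem_mul]
      exact ⟨r, hrS, r⁻¹ * g, hrk, by group⟩
    exact Nat.sInf_le hmem
end

section
/- Let G be a group, k ∈ ℕ, and define the generalised commutator subgroups Ḡ_k = {g ∈ G : g^n ∈ G_k for some n ∈ ℕ}, where G_k is the k-th term of the lower central series. If [Ḡ_k : Ḡ_{k+1}] < ∞ then Ḡ_j = Ḡ_k for all j ≥ k; in particular ⋂_{i=1}^∞ Ḡ_i = Ḡ_k. -/
/-!
Write `γ i` for the lower central series and `I(H) = {g | gⁿ ∈ H for some n > 0}` for the isolator,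
so that `Ḡ_i = I(γ i)`. Finite index of `Ḡ_{k+1}` in `Ḡ_k` gives `γ k ⊆ I(γ (k+1))`. This
inclusion propagates: modulo `γ (i+2)` the group `γ (i+1)` is central, so for `x ∈ γ i` one has
`⁅x, g⁆ᵐ ≡ ⁅xᵐ, g⁆`, which lies in `γ (i+2)` as soon as `xᵐ ∈ γ (i+1)`. Since `Ḡ_{i+2}` is a
subgroup containing these generators, `γ (i+1) ⊆ I(γ (i+2))`, i.e. `Ḡ_{i+1} = Ḡ_{i+2}`.
-/

open scoped commutatorElement

theorem commutatorElement_pow_left_of_commute {G : Type*} [Group G] {x g : G}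
    (h : Commute x ⁅x, g⁆) (n : ℕ) : ⁅x ^ n, g⁆ = ⁅x, g⁆ ^ n := by
  induction n with
  | zero => simp
  | succ n ih =>
    calc ⁅x ^ (n + 1), g⁆ = x * ⁅x ^ n, g⁆ * x⁻¹ * ⁅x, g⁆ := by
          simp only [commutatorElement_def, pow_succ']
          group
      _ = ⁅x, g⁆ ^ (n + 1) := by rw [ih, (h.pow_right n).eq, mul_inv_cancel_right, pow_succ]

namespace Subgroup

variable {G : Type*} [Group G]

/-- Not a subgroup in general. -/
def isolator (H : Subgroup G) : Set G := {g | ∃ n, 0 < n ∧ g ^ n ∈ H}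

theorem subset_isolator (H : Subgroup G) : (H : Set G) ⊆ H.isolator :=
  fun g hg => ⟨1, one_pos, by simpa using hg⟩

theorem isolator_mono {H K : Subgroup G} (h : H ≤ K) : H.isolator ⊆ K.isolator :=
  fun _ ⟨n, hn, hg⟩ => ⟨n, hn, h hg⟩

theorem isolator_subset_isolator_iff {H K : Subgroup G} :
    H.isolator ⊆ K.isolator ↔ (H : Set G) ⊆ K.isolator := by
  refine ⟨(subset_isolator H).trans, fun h g ⟨n, hn, hgn⟩ => ?_⟩
  obtain ⟨m, hm, hgnm⟩ := h hgn
  exact ⟨n * m, Nat.mul_pos hn hm, by rwa [pow_mul]⟩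

theorem subset_isolator_of_relIndex_ne_zero {H K : Subgroup G} (h : H.relIndex K ≠ 0) :
    (K : Set G) ⊆ H.isolator := fun _ hg =>
  let ⟨n, hn, _, hgn⟩ := exists_pow_mem_of_relIndex_ne_zero h hg
  ⟨n, hn, hgn.1⟩

theorem isolator_lowerCentralSeries_antitone :
    Antitone fun i => ((⊤ : Subgroup G).lowerCentralSeries i).isolator :=
  fun _ _ hij => isolator_mono (lowerCentralSeries_antitone ⊤ hij)

theorem commutatorElement_mem_lowerCentralSeries_succ {i : ℕ} {x : G}
    (hx : x ∈ (⊤ : Subgroup G).lowerCentralSeries i) (g : G) :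
    ⁅x, g⁆ ∈ (⊤ : Subgroup G).lowerCentralSeries (i + 1) :=
  commutator_mem_commutator hx (mem_top g)

theorem commutatorElement_pow_mem_lowerCentralSeries {i m : ℕ} {x : G}
    (hx : x ∈ (⊤ : Subgroup G).lowerCentralSeries i)
    (hxm : x ^ m ∈ (⊤ : Subgroup G).lowerCentralSeries (i + 1)) (g : G) :
    ⁅x, g⁆ ^ m ∈ (⊤ : Subgroup G).lowerCentralSeries (i + 2) := by
  let π := QuotientGroup.mk' ((⊤ : Subgroup G).lowerCentralSeries (i + 2))
  have hcomm : Commute (π x) ⁅π x, π g⁆ := by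
    rw [← commutatorElement_eq_one_iff_commute, ← commutatorElement_inv, inv_eq_one,
      ← map_commutatorElement, ← map_commutatorElement, QuotientGroup.mk'_apply,
      QuotientGroup.eq_one_iff]
    exact commutatorElement_mem_lowerCentralSeries_succ
      (commutatorElement_mem_lowerCentralSeries_succ hx g) x
  rw [← QuotientGroup.eq_one_iff, ← QuotientGroup.mk'_apply, map_pow, map_commutatorElement,
    ← commutatorElement_pow_left_of_commute hcomm, ← map_pow, ← map_commutatorElement,
    QuotientGroup.mk'_apply, QuotientGroup.eq_one_iff]
  exact commutatorElement_mem_lowerCentralSeries_succ hxm g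

theorem lowerCentralSeries_succ_subset_isolator {i : ℕ} {K : Subgroup G}
    (hK : (K : Set G) = ((⊤ : Subgroup G).lowerCentralSeries (i + 2)).isolator)
    (hi : ((⊤ : Subgroup G).lowerCentralSeries i : Set G) ⊆
      ((⊤ : Subgroup G).lowerCentralSeries (i + 1)).isolator) :
    ((⊤ : Subgroup G).lowerCentralSeries (i + 1) : Set G) ⊆
      ((⊤ : Subgroup G).lowerCentralSeries (i + 2)).isolator := by
  rw [← hK, SetLike.coe_subset_coe, lowerCentralSeries_succ, commutator_le]
  rintro x hx g -
  obtain ⟨m, hm, hxm⟩ := hi hx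
  rw [← SetLike.mem_coe, hK]
  exact ⟨m, hm, commutatorElement_pow_mem_lowerCentralSeries hx hxm g⟩

end Subgroup

open Subgroup in
/-- If the `k`-th generalised commutator subgroup
`Ḡ_k = {g : g^n ∈ G_k for some n ≥ 1}` contains `Ḡ_{k+1}` with finite index, then
the generalised commutator subgroups stabilise at `Ḡ_k`, and in particular the
intersection of all of them is `Ḡ_k`.  (The subgroups `Ḡ_i` are given as data
together with the identification of their underlying sets.) -/
theorem generalised_commutator_stabilises {G : Type*} [Group G] (k : ℕ)
    (Gbar : ℕ → Subgroup G)
    (hGbar : ∀ i, (Gbar i : Set G) =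
      {g : G | ∃ n : ℕ, 0 < n ∧ g ^ n ∈ (⊤ : Subgroup G).lowerCentralSeries i})
    (hfin : (Gbar (k + 1)).relIndex (Gbar k) ≠ 0) :
    (∀ j : ℕ, k ≤ j → Gbar j = Gbar k) ∧
    (⋂ i : ℕ, (Gbar i : Set G)) = (Gbar k : Set G) := by
  let γ := (⊤ : Subgroup G).lowerCentralSeries
  change ∀ i, (Gbar i : Set G) = (γ i).isolator at hGbar
  have hbase : (γ k : Set G) ⊆ (γ (k + 1)).isolator :=
    calc (γ k : Set G) ⊆ (γ k).isolator := subset_isolator _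
      _ = Gbar k := (hGbar k).symm
      _ ⊆ (Gbar (k + 1)).isolator := subset_isolator_of_relIndex_ne_zero hfin
      _ ⊆ (γ (k + 1)).isolator := isolator_subset_isolator_iff.2 (hGbar (k + 1)).subset
  have hsubset : ∀ j, k ≤ j → (γ j : Set G) ⊆ (γ (j + 1)).isolator := fun j hj =>
    Nat.le_induction hbase (fun i _ => lowerCentralSeries_succ_subset_isolator (hGbar (i + 2))) j hj
  have hstab : ∀ j, k ≤ j → Gbar j = Gbar k := by
    intro j hj
    induction j, hj using Nat.le_induction with
    | base => rfl
    | succ j hj ih =>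
      refine .trans (SetLike.coe_injective ?_) ih
      rw [hGbar, hGbar]
      exact (isolator_lowerCentralSeries_antitone j.le_succ).antisymm
        (isolator_subset_isolator_iff.2 (hsubset j hj))
  have hanti : Antitone fun i => (Gbar i : Set G) := by
    simpa only [hGbar] using isolator_lowerCentralSeries_antitone
  refine ⟨hstab, (Set.iInter_subset _ k).antisymm (Set.subset_iInter fun i => ?_)⟩
  rcases le_total i k with h | h
  · exact hanti h
  · rw [hstab i h]
end

section
/- Let G be a torsion-free nilpotent group with a generating set x_1,…,x_h such that every element of G is uniquely x_1^{ℓ_1}⋯x_h^{ℓ_h} with ℓ_i ∈ ℤ and [x_i,x_j] ∈ ⟨x_{j+1},…,x_h⟩ whenever i < j. Suppose H = {x_1^{q_1 ℓ_1}⋯x_h^{q_h ℓ_h} : ℓ_i ∈ ℤ} is a subgroup for some positive integers q_1,…,q_h. Then X = {x_1^{k_1}⋯x_h^{k_h} : 0 ≤ k_i < q_i} contains exactly one element from each coset of H in G; in particular [G:H] = q_1 q_2 ⋯ q_h. -/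
/-!
The tails `T_j = ⟨x_j, …, x_h⟩` are normal subgroups (by downward induction on `j`, using the
triangular commutator relations), and `T_j = ⟨x_j⟩ T_{j+1}`. Writing `g ∈ T_j` as `x_j^a u`
with `a = q_j m + r`, `0 ≤ r < q_j`, and moving `x_j^{q_j m} ∈ H` to the right past `u`
produces box coordinates for the coset `gH` one index at a time. Conversely, if two box points
lie in the same coset and agree below `j`, their quotient lies in `x_j^d T_{j+1} ∩ H` with
`|d| < q_j`; uniqueness of normal forms forces `q_j ∣ d`, so `d = 0`. Counting the box gives
the index.
-/

/-- Torsion-free monoid (Mathlib's former `Monoid.IsTorsionFree`, removed since). -/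
def Monoid.IsTorsionFree (G : Type*) [Monoid G] : Prop :=
  ∀ g : G, g ≠ 1 → ¬IsOfFinOrder g

open scoped commutatorElement

namespace Subgroup

variable {G : Type*} [Group G]

theorem conj_mem_closure_of_forall {s : Set G} {g : G} (h : ∀ t ∈ s, g * t * g⁻¹ ∈ closure s)
    {k : G} (hk : k ∈ closure s) : g * k * g⁻¹ ∈ closure s :=
  (closure_le (K := (closure s).comap (MulAut.conj g).toMonoidHom)).2 h hk

theorem mem_normalizer_closure_of_forall {s : Set G} {g : G}
    (h₁ : ∀ t ∈ s, g * t * g⁻¹ ∈ closure s) (h₂ : ∀ t ∈ s, g⁻¹ * t * g ∈ closure s) :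
    g ∈ normalizer (closure s : Set G) := by
  refine mem_normalizer_iff.2 fun k => ⟨conj_mem_closure_of_forall h₁, fun hk => ?_⟩
  simpa [mul_assoc] using conj_mem_closure_of_forall (g := g⁻¹) (by simpa using h₂) hk

theorem index_eq_card_of_existsUnique_inv_mul_mem {ι : Type*} {H : Subgroup G} {p : ι → Prop}
    (f : ι → G) (hf : ∀ g, ∃! i, p i ∧ g⁻¹ * f i ∈ H) : H.index = Nat.card {i // p i} := by
  refine (Nat.card_congr (Equiv.ofBijective (fun i : {i // p i} => (f i : G ⧸ H)) ⟨?_, ?_⟩)).symm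
  · rintro ⟨i, hi⟩ ⟨i', hi'⟩ h
    exact Subtype.ext ((hf (f i)).unique ⟨hi, by simp⟩ ⟨hi', QuotientGroup.eq.1 h⟩)
  · refine QuotientGroup.mk_surjective.forall.2 fun g => ?_
    obtain ⟨i, ⟨hi, hgi⟩, -⟩ := hf g
    exact ⟨⟨i, hi⟩, QuotientGroup.eq.2 (by simpa using inv_mem hgi)⟩

end Subgroup

theorem Nat.card_box_eq_toNat_prod {ι : Type*} [Fintype ι] {q : ι → ℤ} (hq : ∀ i, 0 ≤ q i) :
    Nat.card {v : ι → ℤ // ∀ i, 0 ≤ v i ∧ v i < q i} = (∏ i, q i).toNat := by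
  rw [Nat.card_congr (Equiv.subtypePiEquivPi (p := fun i k => 0 ≤ k ∧ k < q i)), Nat.card_pi,
    ← Int.toNat_natCast (∏ i, _)]
  push_cast
  refine congrArg _ (Finset.prod_congr rfl fun i _ => ?_)
  rw [show Nat.card {k : ℤ // 0 ≤ k ∧ k < q i} = Nat.card (Set.Ico 0 (q i)) from rfl,
    Nat.card_eq_fintype_card, Int.card_fintype_Ico_of_le _ _ (hq i), sub_zero]

namespace Malcev

open Subgroup Function

variable {G : Type*} [Group G] {n : ℕ}

def normalForm (x : Fin n → G) (ℓ : Fin n → ℤ) : G :=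
  (List.ofFn fun i => x i ^ ℓ i).prod

def tailSubgroup (x : Fin n → G) (j : ℕ) : Subgroup G :=
  closure (x '' {k | j ≤ (k : ℕ)})

@[simp]
theorem normalForm_zero (x : Fin n → G) : normalForm x 0 = 1 := by
  simp [normalForm]

theorem normalForm_succ (x : Fin (n + 1) → G) (ℓ : Fin (n + 1) → ℤ) :
    normalForm x ℓ = x 0 ^ ℓ 0 * normalForm (Fin.tail x) (Fin.tail ℓ) := by
  simp [normalForm, List.ofFn_succ, Fin.tail]

theorem normalForm_update {x : Fin n → G} {s : Fin n → ℤ} {j : Fin n}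
    (hs : ∀ i ≤ j, s i = 0) (m : ℤ) :
    normalForm x (update s j m) = x j ^ m * normalForm x s := by
  induction n with
  | zero => exact j.elim0
  | succ n ih =>
    rw [normalForm_succ, normalForm_succ x s, hs 0 (Fin.zero_le j), zpow_zero, one_mul]
    cases j using Fin.cases with
    | zero => rw [Fin.tail_update_zero, update_self]
    | succ j =>
      rw [Fin.tail_update_succ, update_of_ne (Fin.succ_ne_zero j).symm, hs 0 (Fin.zero_le _),
        zpow_zero, one_mul]
      exact ih (fun i hi => hs i.succ (Fin.succ_le_succ_iff.2 hi))

theorem normalForm_single (x : Fin n → G) (j : Fin n) (m : ℤ) :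
    normalForm x (Pi.single j m) = x j ^ m := by
  have h := normalForm_update (x := x) (s := 0) (j := j) (fun _ _ => rfl) m
  rwa [normalForm_zero, mul_one] at h

theorem normalForm_eq_zpow_mul_update {x : Fin n → G} {ℓ : Fin n → ℤ} {j : Fin n}
    (hℓ : ∀ i < j, ℓ i = 0) :
    normalForm x ℓ = x j ^ ℓ j * normalForm x (update ℓ j 0) := by
  have key := normalForm_update (x := x) (s := update ℓ j 0) (j := j) (fun i hi => ?_) (ℓ j)
  · rwa [update_idem, update_eq_self] at key
  rcases hi.lt_or_eq with hi | rfl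
  · rw [update_of_ne hi.ne, hℓ i hi]
  · exact update_self ..

theorem normalForm_mem_tailSubgroup (x : Fin n → G) {ℓ : Fin n → ℤ} {j : ℕ}
    (hℓ : ∀ i : Fin n, (i : ℕ) < j → ℓ i = 0) : normalForm x ℓ ∈ tailSubgroup x j := by
  refine list_prod_mem fun g hg => ?_
  obtain ⟨i, rfl⟩ := List.mem_ofFn.1 hg
  rcases lt_or_ge (i : ℕ) j with hi | hi
  · simp [hℓ i hi]
  · exact zpow_mem (subset_closure (Set.mem_image_of_mem x hi)) _

theorem tailSubgroup_antitone (x : Fin n → G) : Antitone (tailSubgroup x) :=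
  fun _ _ hjj' => closure_mono (Set.image_mono fun _ hk => le_trans hjj' hk)

theorem tailSubgroup_of_le (x : Fin n → G) {j : ℕ} (hj : n ≤ j) : tailSubgroup x j = ⊥ := by
  rw [tailSubgroup, closure_eq_bot_iff]
  rintro _ ⟨k, hk, -⟩
  exact absurd (hk.trans_lt k.isLt) hj.not_gt

theorem tailSubgroup_eq_zpowers_sup (x : Fin n → G) {j : ℕ} (hj : j < n) :
    tailSubgroup x j = zpowers (x ⟨j, hj⟩) ⊔ tailSubgroup x (j + 1) := by
  have : {k : Fin n | j ≤ (k : ℕ)} = insert ⟨j, hj⟩ {k : Fin n | j + 1 ≤ (k : ℕ)} := by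
    ext k
    simp only [Set.mem_ofPred_eq, Set.mem_insert_iff, Fin.ext_iff]
    omega
  rw [tailSubgroup, this, Set.image_insert_eq, Set.insert_eq, Subgroup.closure_union,
    ← zpowers_eq_closure, tailSubgroup]

theorem exists_zpow_mul_of_mem_tailSubgroup (x : Fin n → G) {j : ℕ} (hj : j < n)
    [(tailSubgroup x (j + 1)).Normal] {g : G} (hg : g ∈ tailSubgroup x j) :
    ∃ a : ℤ, ∃ u ∈ tailSubgroup x (j + 1), x ⟨j, hj⟩ ^ a * u = g := by
  rw [← SetLike.mem_coe, tailSubgroup_eq_zpowers_sup x hj, mul_normal] at hg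
  obtain ⟨_, ⟨a, rfl⟩, u, hu, rfl⟩ := hg
  exact ⟨a, u, hu, rfl⟩

theorem tailSubgroup_normal_of_succ (x : Fin n → G) (hgen : tailSubgroup x 0 = ⊤)
    (htri : ∀ i k : Fin n, i < k → ⁅x i, x k⁆ ∈ tailSubgroup x (k + 1)) {j : ℕ}
    (hN : (tailSubgroup x (j + 1)).Normal) : (tailSubgroup x j).Normal := by
  have hmem {k : Fin n} (hk : j ≤ (k : ℕ)) : x k ∈ tailSubgroup x j :=
    subset_closure (Set.mem_image_of_mem x hk)
  have hsucc : tailSubgroup x (j + 1) ≤ tailSubgroup x j := tailSubgroup_antitone x j.le_succ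
  have hconj (i k : Fin n) (hk : j ≤ (k : ℕ)) :
      x i * x k * (x i)⁻¹ ∈ tailSubgroup x j ∧ (x i)⁻¹ * x k * x i ∈ tailSubgroup x j := by
    by_cases hik : i < k
    · have hc : ⁅x i, x k⁆ ∈ tailSubgroup x (j + 1) :=
        tailSubgroup_antitone x (Nat.succ_le_succ hk) (htri i k hik)
      rw [show x i * x k * (x i)⁻¹ = ⁅x i, x k⁆ * x k by group,
        show (x i)⁻¹ * x k * x i = ((x i)⁻¹ * ⁅x i, x k⁆⁻¹ * (x i)⁻¹⁻¹) * x k by group]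
      exact ⟨mul_mem (hsucc hc) (hmem hk),
        mul_mem (hsucc (hN.conj_mem _ (inv_mem hc) _)) (hmem hk)⟩
    · have hxi := hmem (show j ≤ (i : ℕ) from le_trans hk (Fin.not_lt.1 hik))
      exact ⟨mul_mem (mul_mem hxi (hmem hk)) (inv_mem hxi),
        mul_mem (mul_mem (inv_mem hxi) (hmem hk)) hxi⟩
  rw [← normalizer_eq_top_iff, eq_top_iff, ← hgen]
  refine (closure_le _).2 ?_
  rintro _ ⟨i, -, rfl⟩
  exact mem_normalizer_closure_of_forall (fun _ ⟨k, hk, hxk⟩ => hxk ▸ (hconj i k hk).1)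
    (fun _ ⟨k, hk, hxk⟩ => hxk ▸ (hconj i k hk).2)

theorem tailSubgroup_normal (x : Fin n → G) (hgen : tailSubgroup x 0 = ⊤)
    (htri : ∀ i k : Fin n, i < k → ⁅x i, x k⁆ ∈ tailSubgroup x (k + 1)) {j : ℕ} (hj : j ≤ n) :
    (tailSubgroup x j).Normal := by
  induction hj using Nat.decreasingInduction with
  | self => rw [tailSubgroup_of_le x le_rfl]; exact normal_bot
  | of_succ j _ ih => exact tailSubgroup_normal_of_succ x hgen htri ih

theorem exists_normalForm_of_mem_tailSubgroup (x : Fin n → G)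
    (hN : ∀ k ≤ n, (tailSubgroup x k).Normal) {j : ℕ} (hj : j ≤ n) {g : G}
    (hg : g ∈ tailSubgroup x j) :
    ∃ ℓ : Fin n → ℤ, (∀ i : Fin n, (i : ℕ) < j → ℓ i = 0) ∧ normalForm x ℓ = g := by
  induction hj using Nat.decreasingInduction generalizing g with
  | self =>
    rw [tailSubgroup_of_le x le_rfl, mem_bot] at hg
    exact ⟨0, fun _ _ => rfl, by rw [normalForm_zero, hg]⟩
  | of_succ j hj ih =>
    have := hN (j + 1) hj
    obtain ⟨a, u, hu, rfl⟩ := exists_zpow_mul_of_mem_tailSubgroup x hj hg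
    obtain ⟨s, hs, rfl⟩ := ih hu
    refine ⟨update s ⟨j, hj⟩ a, fun i hi => ?_, normalForm_update (fun i hi => hs i ?_) a⟩
    · rw [update_of_ne (Fin.ne_of_val_ne hi.ne), hs i (by omega)]
    · exact Nat.lt_succ_of_le hi

theorem exists_box_inv_mul_mem (x : Fin n → G) (hN : ∀ k ≤ n, (tailSubgroup x k).Normal)
    {q : Fin n → ℤ} (hq : ∀ i, 0 < q i) {H : Subgroup G} (hpow : ∀ i m, x i ^ (q i * m) ∈ H)
    {j : ℕ} (hj : j ≤ n) {g : G} (hg : g ∈ tailSubgroup x j) :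
    ∃ v : Fin n → ℤ, (∀ i, 0 ≤ v i ∧ v i < q i) ∧ (∀ i : Fin n, (i : ℕ) < j → v i = 0) ∧
      g⁻¹ * normalForm x v ∈ H := by
  induction hj using Nat.decreasingInduction generalizing g with
  | self =>
    rw [tailSubgroup_of_le x le_rfl, mem_bot] at hg
    exact ⟨0, fun i => ⟨le_rfl, hq i⟩, fun _ _ => rfl, by simp [hg]⟩
  | of_succ j hj ih =>
    have := hN (j + 1) hj
    obtain ⟨a, u, hu, rfl⟩ := exists_zpow_mul_of_mem_tailSubgroup x hj hg
    set jf : Fin n := ⟨j, hj⟩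
    set m := a / q jf
    set r := a % q jf
    have ha : a = q jf * m + r := (Int.mul_ediv_add_emod a (q jf)).symm
    -- Split off `x_j ^ (q_j m) ∈ H` on the right; conjugating it past `u` stays in the tail.
    obtain ⟨v, hv, hv0, hvH⟩ :=
      ih (g := x jf ^ (q jf * m) * u * (x jf ^ (q jf * m))⁻¹) (this.conj_mem u hu _)
    refine ⟨update v jf r, fun i => ?_, fun i hi => ?_, ?_⟩
    · rcases eq_or_ne i jf with rfl | hi
      · rw [update_self]
        exact ⟨Int.emod_nonneg a (hq _).ne', Int.emod_lt_of_pos a (hq _)⟩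
      · rw [update_of_ne hi]; exact hv i
    · rw [update_of_ne (Fin.ne_of_val_ne hi.ne), hv0 i (by omega)]
    · rw [normalForm_update (fun i hi => hv0 i (Nat.lt_succ_of_le hi))]
      convert mul_mem (inv_mem (hpow jf m)) hvH using 1
      rw [ha]
      group

theorem dvd_of_zpow_mul_mem (x : Fin n → G) (hN : ∀ k ≤ n, (tailSubgroup x k).Normal)
    (hinj : Injective (normalForm x)) {q : Fin n → ℤ} {H : Subgroup G}
    (hH : ∀ g ∈ H, ∃ ℓ, normalForm x (q * ℓ) = g) (j : Fin n) {d : ℤ} {u : G}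
    (hu : u ∈ tailSubgroup x (j + 1)) (hmem : x j ^ d * u ∈ H) : q j ∣ d := by
  obtain ⟨s, hs, rfl⟩ := exists_normalForm_of_mem_tailSubgroup x hN j.isLt hu
  obtain ⟨ℓ, hℓ⟩ := hH _ hmem
  rw [← normalForm_update (fun i hi => hs i (Nat.lt_succ_of_le hi))] at hℓ
  exact ⟨ℓ j, by simpa using (congr_fun (hinj hℓ) j).symm⟩

theorem box_update_zero {ι : Type*} [DecidableEq ι] {q u : ι → ℤ}
    (hu : ∀ i, 0 ≤ u i ∧ u i < q i) (j : ι) (i : ι) :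
    0 ≤ update u j 0 i ∧ update u j 0 i < q i := by
  rcases eq_or_ne i j with rfl | hi
  · rw [update_self]; exact ⟨le_rfl, (hu _).1.trans_lt (hu _).2⟩
  · rw [update_of_ne hi]; exact hu i

theorem update_zero_eq_zero_of_lt_succ {u : Fin n → ℤ} {j : Fin n}
    (hu : ∀ i : Fin n, (i : ℕ) < j → u i = 0) (i : Fin n) (hi : (i : ℕ) < j + 1) :
    update u j 0 i = 0 := by
  rcases eq_or_ne i j with rfl | hij
  · exact update_self ..
  · rw [update_of_ne hij, hu i (by omega)]

theorem eq_of_box_of_inv_mul_mem (x : Fin n → G) (hN : ∀ k ≤ n, (tailSubgroup x k).Normal)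
    (hinj : Injective (normalForm x)) {q : Fin n → ℤ} {H : Subgroup G}
    (hH : ∀ g ∈ H, ∃ ℓ, normalForm x (q * ℓ) = g) {j : ℕ} (hj : j ≤ n) {v v' : Fin n → ℤ}
    (hv : ∀ i, 0 ≤ v i ∧ v i < q i) (hv' : ∀ i, 0 ≤ v' i ∧ v' i < q i)
    (hv0 : ∀ i : Fin n, (i : ℕ) < j → v i = 0) (hv'0 : ∀ i : Fin n, (i : ℕ) < j → v' i = 0)
    (hmem : (normalForm x v)⁻¹ * normalForm x v' ∈ H) : v = v' := by
  induction hj using Nat.decreasingInduction generalizing v v' with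
  | self => exact funext fun i => (hv0 i i.isLt).trans (hv'0 i i.isLt).symm
  | of_succ j hj ih =>
    have hN' := hN (j + 1) hj
    set jf : Fin n := ⟨j, hj⟩
    rw [normalForm_eq_zpow_mul_update (j := jf) hv0,
      normalForm_eq_zpow_mul_update (j := jf) hv'0] at hmem
    have hw0 := update_zero_eq_zero_of_lt_succ (j := jf) hv0
    have hw'0 := update_zero_eq_zero_of_lt_succ (j := jf) hv'0
    have hW := normalForm_mem_tailSubgroup x hw0
    have hW' := normalForm_mem_tailSubgroup x hw'0
    -- The quotient is `x_j ^ (v'_j - v_j)` times an element of the tail `T_{j+1}`.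
    have hdvd : q jf ∣ v' jf - v jf := by
      refine dvd_of_zpow_mul_mem x hN hinj hH jf
        (mul_mem (hN'.conj_mem _ (inv_mem hW) (x jf ^ (-(v' jf - v jf)))) hW') ?_
      convert hmem using 1
      group
    have hvj : v jf = v' jf := by
      have := Int.eq_zero_of_abs_lt_dvd hdvd (abs_sub_lt_iff.2
        ⟨by linarith [hv jf, hv' jf], by linarith [hv jf, hv' jf]⟩)
      omega
    have hww : update v jf 0 = update v' jf 0 := by
      refine ih (box_update_zero hv jf) (box_update_zero hv' jf) hw0 hw'0 ?_
      convert hmem using 1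
      rw [hvj]
      group
    calc v = update (update v jf 0) jf (v jf) := by rw [update_idem, update_eq_self]
      _ = update (update v' jf 0) jf (v' jf) := by rw [hww, hvj]
      _ = v' := by rw [update_idem, update_eq_self]

theorem existsUnique_box_inv_mul_mem (x : Fin n → G) (hbij : Bijective (normalForm x))
    (htri : ∀ i k : Fin n, i < k → ⁅x i, x k⁆ ∈ tailSubgroup x (k + 1)) {q : Fin n → ℤ}
    (hq : ∀ i, 0 < q i) {H : Subgroup G}
    (hH : (H : Set G) = {g | ∃ ℓ, g = normalForm x (q * ℓ)}) (g : G) :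
    ∃! v : Fin n → ℤ, (∀ i, 0 ≤ v i ∧ v i < q i) ∧ g⁻¹ * normalForm x v ∈ H := by
  have hgen : tailSubgroup x 0 = ⊤ := eq_top_iff.2 fun g _ => by
    obtain ⟨ℓ, rfl⟩ := hbij.2 g
    exact normalForm_mem_tailSubgroup x fun _ h => absurd h (Nat.not_lt_zero _)
  have hN k (hk : k ≤ n) := tailSubgroup_normal x hgen htri hk
  have hH' (g : G) (hg : g ∈ H) : ∃ ℓ, normalForm x (q * ℓ) = g := by
    rw [← SetLike.mem_coe, hH] at hg
    obtain ⟨ℓ, rfl⟩ := hg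
    exact ⟨ℓ, rfl⟩
  have hpow (i : Fin n) (m : ℤ) : x i ^ (q i * m) ∈ H := by
    rw [← normalForm_single, Pi.single_mul_right, ← SetLike.mem_coe, hH]
    exact ⟨_, rfl⟩
  obtain ⟨v, hv, -, hvH⟩ := exists_box_inv_mul_mem x hN hq hpow n.zero_le (hgen ▸ mem_top g)
  refine ⟨v, ⟨hv, hvH⟩, fun v' ⟨hv', hv'H⟩ => (eq_of_box_of_inv_mul_mem x hN hbij.1 hH'
    n.zero_le hv hv' (by simp) (by simp) ?_).symm⟩
  simpa [mul_assoc] using mul_mem (inv_mem hvH) hv'H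

end Malcev

open Malcev

theorem malcev_box_coset_representatives_general {G : Type*} [Group G]
    (h : ℕ) (x : Fin h → G)
    (hunique : ∀ g : G, ∃! ℓ : Fin h → ℤ,
      g = (List.ofFn fun i => x i ^ ℓ i).prod)
    (htri : ∀ i j : Fin h, i < j →
      ⁅x i, x j⁆ ∈ Subgroup.closure {g : G | ∃ k : Fin h, j < k ∧ g = x k})
    (q : Fin h → ℤ) (hq : ∀ i, 0 < q i)
    (H : Subgroup G)
    (hH : (H : Set G) =
      {g : G | ∃ ℓ : Fin h → ℤ, g = (List.ofFn fun i => x i ^ (q i * ℓ i)).prod}) :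
    (∀ g : G, ∃! v : Fin h → ℤ,
      (∀ i, 0 ≤ v i ∧ v i < q i) ∧
        g⁻¹ * (List.ofFn fun i => x i ^ v i).prod ∈ H) ∧
    H.index = (∏ i : Fin h, q i).toNat := by
  have hbij : Function.Bijective (normalForm x) :=
    (Function.bijective_iff_existsUnique _).2 fun g => by
      simpa only [normalForm, eq_comm] using hunique g
  have htri' (i k : Fin h) (hik : i < k) : ⁅x i, x k⁆ ∈ tailSubgroup x (k + 1) :=
    Subgroup.closure_mono (k := x '' {m | (k : ℕ) + 1 ≤ m})
      (by rintro _ ⟨m, hm, rfl⟩; exact ⟨m, hm, rfl⟩) (htri i k hik)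
  have hbox := existsUnique_box_inv_mul_mem x hbij htri' hq hH
  exact ⟨hbox, (H.index_eq_card_of_existsUnique_inv_mul_mem _ hbox).trans
    (Nat.card_box_eq_toNat_prod fun i => (hq i).le)⟩

/-- Mal'cev coordinates: in a torsion-free nilpotent group with a unique normal form
`g = x_1^{ℓ_1} ⋯ x_h^{ℓ_h}` and triangular commutation relations, if
`H = {x_1^{q_1 ℓ_1} ⋯ x_h^{q_h ℓ_h}}` is a subgroup then the "box"
`{x_1^{k_1} ⋯ x_h^{k_h} : 0 ≤ k_i < q_i}` contains exactly one point of each coset of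
`H`, and in particular `[G : H] = q_1 ⋯ q_h`. -/
theorem malcev_box_coset_representatives {G : Type*} [Group G]
    (hnil : Group.IsNilpotent G) (htf : Monoid.IsTorsionFree G)
    (h : ℕ) (x : Fin h → G)
    (hunique : ∀ g : G, ∃! ℓ : Fin h → ℤ,
      g = (List.ofFn fun i => x i ^ ℓ i).prod)
    (htri : ∀ i j : Fin h, i < j →
      ⁅x i, x j⁆ ∈ Subgroup.closure {g : G | ∃ k : Fin h, j < k ∧ g = x k})
    (q : Fin h → ℤ) (hq : ∀ i, 0 < q i)
    (H : Subgroup G)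
    (hH : (H : Set G) =
      {g : G | ∃ ℓ : Fin h → ℤ, g = (List.ofFn fun i => x i ^ (q i * ℓ i)).prod}) :
    (∀ g : G, ∃! v : Fin h → ℤ,
      (∀ i, 0 ≤ v i ∧ v i < q i) ∧
        g⁻¹ * (List.ofFn fun i => x i ^ v i).prod ∈ H) ∧
    H.index = (∏ i : Fin h, q i).toNat :=
  malcev_box_coset_representatives_general h x hunique htri q hq H hH
end

section
/- Let Γ be the group of n×n upper unitriangular integer matrices. For every prime p ≥ n, the set K_p = {I + pB : B strictly upper-triangular integer matrix} equals Γ^p, the subgroup generated by p-th powers in Γ. -/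
open Matrix

namespace UnitriAux

open Finset

abbrev Mat (n : ℕ) := Matrix (Fin n) (Fin n) ℤ

/-- strictly upper triangular -/
def SU {n : ℕ} (A : Mat n) : Prop := ∀ i j : Fin n, (j : ℕ) ≤ (i : ℕ) → A i j = 0

variable {n : ℕ}

lemma SU.add {A B : Mat n} (hA : SU A) (hB : SU B) : SU (A + B) := fun i j h => by
  rw [Matrix.add_apply, hA i j h, hB i j h, add_zero]

lemma SU.neg {A : Mat n} (hA : SU A) : SU (-A) := fun i j h => by
  rw [Matrix.neg_apply, hA i j h, neg_zero]

lemma SU.smul {A : Mat n} (c : ℤ) (hA : SU A) : SU (c • A) := fun i j h => by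
  rw [Matrix.smul_apply, hA i j h, smul_zero]

lemma SU.mul {A B : Mat n} (hA : SU A) (hB : SU B) : SU (A * B) := by
  intro i j hij
  rw [Matrix.mul_apply]
  apply Finset.sum_eq_zero
  intro l _
  by_cases hl : (l : ℕ) ≤ (i : ℕ)
  · rw [hA i l hl, zero_mul]
  · rw [hB l j (by omega), mul_zero]

lemma pow_support {A : Mat n} (hA : SU A) (m : ℕ) :
    ∀ i j : Fin n, (j : ℕ) < (i : ℕ) + m → (A ^ m) i j = 0 := by
  induction m with
  | zero =>
    intro i j h
    rw [pow_zero]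
    exact Matrix.one_apply_ne (fun e => by rw [e] at h; omega)
  | succ m ih =>
    intro i j h
    rw [pow_succ, Matrix.mul_apply]
    apply Finset.sum_eq_zero
    intro l _
    by_cases hl : (l : ℕ) < (i : ℕ) + m
    · rw [ih i l hl, zero_mul]
    · rw [hA l j (by omega), mul_zero]

lemma SU.pow {A : Mat n} (hA : SU A) {m : ℕ} (hm : 1 ≤ m) : SU (A ^ m) :=
  fun i j h => pow_support hA m i j (by omega)

lemma pow_eq_zero {A : Mat n} (hA : SU A) {m : ℕ} (hm : n ≤ m) : A ^ m = 0 := by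
  ext i j
  rw [Matrix.zero_apply]
  exact pow_support hA m i j (by have := j.isLt; omega)


lemma one_add_pow {X : Mat n} (hX : X * X = 0) (m : ℕ) :
    (1 + X) ^ m = 1 + (m : ℤ) • X := by
  induction m with
  | zero => simp
  | succ m ih =>
    rw [pow_succ, ih, add_mul, mul_add, mul_add, one_mul, one_mul, mul_one,
      smul_mul_assoc, hX, smul_zero]
    push_cast
    module

def elemGL (i j : Fin n) (hij : i ≠ j) (a : ℤ) : GL (Fin n) ℤ where
  val := 1 + a • Matrix.single i j 1
  inv := 1 - a • Matrix.single i j 1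
  val_inv := by
    have h : (a • Matrix.single i j (1:ℤ)) * (a • Matrix.single i j 1) = 0 := by
      rw [smul_mul_assoc, mul_smul_comm, Matrix.single_mul_single_of_ne (h := Ne.symm hij)]
      simp
    rw [mul_sub, mul_one, add_mul, one_mul, h, add_zero, add_sub_cancel_right]
  inv_val := by
    have h : (a • Matrix.single i j (1:ℤ)) * (a • Matrix.single i j 1) = 0 := by
      rw [smul_mul_assoc, mul_smul_comm, Matrix.single_mul_single_of_ne (h := Ne.symm hij)]
      simp
    rw [mul_add, mul_one, sub_mul, one_mul, h, sub_zero, sub_add_cancel]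

lemma elemGL_val (i j : Fin n) (hij : i ≠ j) (a : ℤ) :
    ((elemGL i j hij a : GL (Fin n) ℤ) : Mat n) = 1 + a • Matrix.single i j 1 := rfl

lemma elemGL_inv_val (i j : Fin n) (hij : i ≠ j) (a : ℤ) :
    (((elemGL i j hij a)⁻¹ : GL (Fin n) ℤ) : Mat n) = 1 - a • Matrix.single i j 1 := rfl

lemma elemGL_pow (i j : Fin n) (hij : i ≠ j) (a : ℤ) (m : ℕ) :
    (elemGL i j hij a) ^ m = elemGL i j hij ((m : ℤ) * a) := by
  apply Units.ext
  show ((elemGL i j hij a : Mat n)) ^ m = _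
  rw [elemGL_val, elemGL_val, one_add_pow, smul_smul]
  rw [smul_mul_assoc, mul_smul_comm, Matrix.single_mul_single_of_ne (h := Ne.symm hij)]
  simp


variable {p : ℕ}

lemma clear (n p : ℕ) (Γ : Subgroup (GL (Fin n) ℤ))
    (hΓ : ∀ g : GL (Fin n) ℤ, g ∈ Γ ↔
      ((∀ i : Fin n, (g : Mat n) i i = 1) ∧
        ∀ i j : Fin n, j < i → (g : Mat n) i j = 0)) :
    ∀ m k : ℕ, 1 ≤ k → ∀ (y : Γ) (B : Mat n),
      ((y : GL (Fin n) ℤ) : Mat n) = 1 + (p : ℤ) • B →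
      (∀ i j : Fin n, (j : ℕ) < (i : ℕ) + k → B i j = 0) →
      (univ.filter fun q : Fin n × Fin n =>
          B q.1 q.2 ≠ 0 ∧ (q.2 : ℕ) = (q.1 : ℕ) + k).card + (n - k) * (n + 1) ≤ m →
      y ∈ Subgroup.closure {y : Γ | ∃ g : Γ, y = g ^ p} := by
  intro m
  induction m with
  | zero =>
    intro k hk y B hM hsupp hmeas
    have hkn : n ≤ k := by
      by_contra h
      have h1 : 1 ≤ (n - k) * (n + 1) := Nat.mul_pos (by omega) (by omega)
      omega
    have hB : B = 0 := by
      ext i j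
      exact hsupp i j (by have := j.isLt; omega)
    have hy : y = 1 := by
      apply Subtype.ext
      apply Units.ext
      show ((y : GL (Fin n) ℤ) : Mat n) = 1
      rw [hM, hB]; simp
    rw [hy]; exact Subgroup.one_mem _
  | succ m ih =>
    intro k hk y B hM hsupp hmeas
    by_cases hkn : n ≤ k
    · have hB : B = 0 := by
        ext i j
        exact hsupp i j (by have := j.isLt; omega)
      have hy : y = 1 := by
        apply Subtype.ext
        apply Units.ext
        show ((y : GL (Fin n) ℤ) : Mat n) = 1
        rw [hM, hB]; simp
      rw [hy]; exact Subgroup.one_mem _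
    push_neg at hkn
    by_cases hSe : (univ.filter fun q : Fin n × Fin n =>
        B q.1 q.2 ≠ 0 ∧ (q.2 : ℕ) = (q.1 : ℕ) + k) = ∅
    · -- diagonal k is clear; move to k+1
      apply ih (k + 1) (by omega) y B hM
      · intro i j hij
        rcases Nat.lt_or_ge (j : ℕ) ((i : ℕ) + k) with h | h
        · exact hsupp i j h
        · by_contra hBij
          have hmem : (i, j) ∈ (univ.filter fun q : Fin n × Fin n =>
              B q.1 q.2 ≠ 0 ∧ (q.2 : ℕ) = (q.1 : ℕ) + k) := by
            simp only [mem_filter, mem_univ, true_and]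
            exact ⟨hBij, by omega⟩
          rw [hSe] at hmem
          exact absurd hmem (Finset.notMem_empty _)
      · have hcard : (univ.filter fun q : Fin n × Fin n =>
            B q.1 q.2 ≠ 0 ∧ (q.2 : ℕ) = (q.1 : ℕ) + (k + 1)).card ≤ n := by
          have hinj := Finset.card_le_card_of_injOn (f := fun q : Fin n × Fin n => q.1)
            (s := univ.filter fun q : Fin n × Fin n =>
              B q.1 q.2 ≠ 0 ∧ (q.2 : ℕ) = (q.1 : ℕ) + (k + 1))
            (t := (univ : Finset (Fin n))) (fun q _ => mem_univ _) ?_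
          · simpa using hinj
          · intro q hq q' hq' he
            simp only [coe_filter, Set.mem_setOf_eq, mem_univ, true_and] at hq hq'
            have : q.2 = q'.2 := by
              apply Fin.ext
              have : (q.1 : ℕ) = (q'.1 : ℕ) := congrArg Fin.val he
              omega
            exact Prod.ext he this
        have h1 : (n - k) * (n + 1) = (n - (k + 1)) * (n + 1) + (n + 1) := by
          have e : n - k = (n - (k + 1)) + 1 := by omega
          rw [e, add_mul, one_mul]
        have h2 : (univ.filter fun q : Fin n × Fin n =>
            B q.1 q.2 ≠ 0 ∧ (q.2 : ℕ) = (q.1 : ℕ) + k).card = 0 := by rw [hSe]; rfl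
        rw [h1, h2] at hmeas
        omega
    · -- pick an entry on diagonal k and clear it
      obtain ⟨⟨i, j⟩, hq⟩ := Finset.nonempty_iff_ne_empty.2 hSe
      simp only [mem_filter, mem_univ, true_and] at hq
      obtain ⟨hBij, hjk⟩ := hq
      have hij : i ≠ j := fun e => by rw [e] at hjk; omega
      set a : ℤ := B i j with ha
      set E : Mat n := Matrix.single i j 1 with hE
      have hmemΓ : elemGL i j hij a ∈ Γ := by
        rw [hΓ]
        constructor
        · intro l
          show (1 + a • Matrix.single i j 1 : Mat n) l l = 1
          have hz : Matrix.single i j (1 : ℤ) l l = 0 :=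
            Matrix.single_apply_of_ne _ _ _ _ _ (fun h : i = l ∧ j = l => hij (h.1.trans h.2.symm))
          rw [Matrix.add_apply, Matrix.smul_apply, hz, smul_zero, add_zero,
            Matrix.one_apply_eq]
        · intro x z hxz
          show (1 + a • Matrix.single i j 1 : Mat n) x z = 0
          have hz : Matrix.single i j (1 : ℤ) x z = 0 := by
            apply Matrix.single_apply_of_ne
            rintro ⟨rfl, rfl⟩
            rw [Fin.lt_def] at hxz
            omega
          rw [Matrix.add_apply, Matrix.smul_apply, hz, smul_zero, add_zero]
          exact Matrix.one_apply_ne (fun h => by rw [h] at hxz; exact lt_irrefl _ hxz)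
      set g : Γ := ⟨elemGL i j hij a, hmemΓ⟩ with hg
      have hgp : ((g ^ p : Γ) : GL (Fin n) ℤ) = elemGL i j hij ((p : ℤ) * a) := by
        rw [SubmonoidClass.coe_pow]
        exact elemGL_pow i j hij a p
      set y' : Γ := (g ^ p)⁻¹ * y with hy'
      set B' : Mat n := B - a • E - ((p : ℤ) * a) • (E * B) with hB'
      have hMy' : ((y' : GL (Fin n) ℤ) : Mat n) = 1 + (p : ℤ) • B' := by
        have c1 : ((y' : GL (Fin n) ℤ) : Mat n)
            = ((((g ^ p)⁻¹ : Γ) : GL (Fin n) ℤ) : Mat n) * ((y : GL (Fin n) ℤ) : Mat n) := by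
          rw [hy']
          push_cast
          rfl
        have c2 : ((((g ^ p)⁻¹ : Γ) : GL (Fin n) ℤ) : Mat n)
            = 1 - ((p : ℤ) * a) • E := by
          have : (((g ^ p)⁻¹ : Γ) : GL (Fin n) ℤ) = (elemGL i j hij ((p : ℤ) * a))⁻¹ := by
            rw [← hgp]
            push_cast
            rfl
          rw [this]
          rfl
        rw [c1, c2, hM, hB']
        rw [sub_mul, one_mul, mul_add, mul_one, smul_mul_assoc, mul_smul_comm, smul_smul]
        rw [smul_sub, smul_sub, smul_smul, smul_smul]
        module
      have hEB : ∀ x z : Fin n, (E * B) x z = if x = i then B j z else 0 := by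
        intro x z
        by_cases hx : x = i
        · subst hx
          rw [if_pos rfl, hE, Matrix.single_mul_apply_same, one_mul]
        · rw [if_neg hx, hE]
          exact Matrix.single_mul_apply_of_ne _ _ _ _ _ hx _
      have hsupp' : ∀ x z : Fin n, (z : ℕ) < (x : ℕ) + k → B' x z = 0 := by
        intro x z hxz
        have h1 : B x z = 0 := hsupp _ _ hxz
        have h2 : E x z = 0 := by
          rw [hE]
          apply Matrix.single_apply_of_ne
          rintro ⟨rfl, rfl⟩
          omega
        have h3 : (E * B) x z = 0 := by
          rw [hEB]
          split
          · next hx =>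
            subst hx
            exact hsupp j z (by omega)
          · rfl
        rw [hB', Matrix.sub_apply, Matrix.sub_apply, Matrix.smul_apply, Matrix.smul_apply,
          h1, h2, h3, smul_zero, smul_zero, sub_zero, sub_zero]
      have hB'ij : B' i j = 0 := by
        have h3 : (E * B) i j = 0 := by
          rw [hEB, if_pos rfl]
          exact hsupp j j (by omega)
        rw [hB', Matrix.sub_apply, Matrix.sub_apply, Matrix.smul_apply, Matrix.smul_apply,
          h3, smul_zero, sub_zero, hE, Matrix.single_apply_same, smul_eq_mul, mul_one,
          ← ha, sub_self]
      have hdiag : ∀ x z : Fin n, (z : ℕ) = (x : ℕ) + k → (x, z) ≠ (i, j) →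
          B' x z = B x z := by
        intro x z hxz hne
        have hxi : x ≠ i := by
          intro e
          subst e
          have : z = j := Fin.ext (by omega)
          subst this
          exact hne rfl
        have h2 : E x z = 0 := by
          rw [hE]
          apply Matrix.single_apply_of_ne
          rintro ⟨rfl, rfl⟩
          exact hxi rfl
        have h3 : (E * B) x z = 0 := by rw [hEB, if_neg hxi]
        rw [hB', Matrix.sub_apply, Matrix.sub_apply, Matrix.smul_apply, Matrix.smul_apply,
          h2, h3, smul_zero, smul_zero, sub_zero, sub_zero]
      have hcard' : (univ.filter fun q : Fin n × Fin n =>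
          B' q.1 q.2 ≠ 0 ∧ (q.2 : ℕ) = (q.1 : ℕ) + k).card
          < (univ.filter fun q : Fin n × Fin n =>
          B q.1 q.2 ≠ 0 ∧ (q.2 : ℕ) = (q.1 : ℕ) + k).card := by
        have hmemS : (i, j) ∈ (univ.filter fun q : Fin n × Fin n =>
            B q.1 q.2 ≠ 0 ∧ (q.2 : ℕ) = (q.1 : ℕ) + k) := by
          simp only [mem_filter, mem_univ, true_and]
          exact ⟨hBij, hjk⟩
        have hsub : (univ.filter fun q : Fin n × Fin n =>
            B' q.1 q.2 ≠ 0 ∧ (q.2 : ℕ) = (q.1 : ℕ) + k)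
            ⊆ (univ.filter fun q : Fin n × Fin n =>
            B q.1 q.2 ≠ 0 ∧ (q.2 : ℕ) = (q.1 : ℕ) + k).erase (i, j) := by
          intro q hq
          simp only [mem_filter, mem_univ, true_and] at hq
          obtain ⟨hq1, hq2⟩ := hq
          have hne : (q.1, q.2) ≠ (i, j) := by
            intro e
            apply hq1
            have e1 : q.1 = i := congrArg Prod.fst e
            have e2 : q.2 = j := congrArg Prod.snd e
            rw [e1, e2]
            exact hB'ij
          rw [Finset.mem_erase]
          constructor
          · intro e; exact hne (by rw [← e])
          · simp only [mem_filter, mem_univ, true_and]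
            refine ⟨?_, hq2⟩
            rw [← hdiag q.1 q.2 hq2 hne]
            exact hq1
        calc (univ.filter fun q : Fin n × Fin n =>
            B' q.1 q.2 ≠ 0 ∧ (q.2 : ℕ) = (q.1 : ℕ) + k).card
            ≤ ((univ.filter fun q : Fin n × Fin n =>
            B q.1 q.2 ≠ 0 ∧ (q.2 : ℕ) = (q.1 : ℕ) + k).erase (i, j)).card :=
              Finset.card_le_card hsub
          _ < _ := Finset.card_erase_lt_of_mem hmemS
      have hy'mem : y' ∈ Subgroup.closure {y : Γ | ∃ g : Γ, y = g ^ p} := by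
        apply ih k hk y' B' hMy' hsupp'
        omega
      have hyy : y = (g ^ p) * y' := by
        rw [hy', mul_inv_cancel_left]
      rw [hyy]
      exact mul_mem (Subgroup.subset_closure ⟨g, rfl⟩) hy'mem


end UnitriAux

open Matrix

/-- In the group `Γ` of `n × n` upper unitriangular integer matrices, for every prime
`p ≥ n` the subgroup `Γ^p` generated by `p`-th powers is exactly the set
`{I + pB : B strictly upper triangular}`. -/
theorem unitriangular_pth_power_subgroup (n p : ℕ) (hp : p.Prime) (hnp : n ≤ p)
    (Γ : Subgroup (GL (Fin n) ℤ))
    (hΓ : ∀ g : GL (Fin n) ℤ, g ∈ Γ ↔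
      ((∀ i : Fin n, (g : Matrix (Fin n) (Fin n) ℤ) i i = 1) ∧
        ∀ i j : Fin n, j < i → (g : Matrix (Fin n) (Fin n) ℤ) i j = 0)) :
    (Subgroup.closure {y : Γ | ∃ g : Γ, y = g ^ p} : Set Γ) =
      {y : Γ | ∃ B : Matrix (Fin n) (Fin n) ℤ,
        (∀ i j : Fin n, j ≤ i → B i j = 0) ∧
        ((y : GL (Fin n) ℤ) : Matrix (Fin n) (Fin n) ℤ) = 1 + (p : ℤ) • B} := by
  classical
  have pth : ∀ g : Γ, ∃ B : UnitriAux.Mat n, (∀ i j : Fin n, j ≤ i → B i j = 0) ∧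
      (((g ^ p : Γ) : GL (Fin n) ℤ) : UnitriAux.Mat n) = 1 + (p : ℤ) • B := by
    intro g
    set A : UnitriAux.Mat n := ((g : GL (Fin n) ℤ) : UnitriAux.Mat n) - 1 with hA
    obtain ⟨hdiag, hlow⟩ := (hΓ _).1 g.2
    have hSUA : ∀ i j : Fin n, (j : ℕ) ≤ (i : ℕ) → A i j = 0 := by
      intro i j h
      rcases eq_or_lt_of_le h with h' | h'
      · have : j = i := Fin.ext h'
        subst this
        rw [hA, Matrix.sub_apply, hdiag, Matrix.one_apply_eq, sub_self]
      · rw [hA, Matrix.sub_apply, hlow i j (by rwa [Fin.lt_def]),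
          Matrix.one_apply_ne (fun e => by rw [e] at h'; omega), sub_zero]
    have hMg : ((g : GL (Fin n) ℤ) : UnitriAux.Mat n) = 1 + A := by rw [hA]; abel
    have hpow : (((g ^ p : Γ) : GL (Fin n) ℤ) : UnitriAux.Mat n)
        = ((g : GL (Fin n) ℤ) : UnitriAux.Mat n) ^ p := by
      rw [SubmonoidClass.coe_pow, Units.val_pow_eq_pow_val]
    have hcomm : Commute (1 : UnitriAux.Mat n) A := Commute.one_left A
    have hexp := hcomm.add_pow_prime_eq' hp
    refine ⟨∑ k ∈ Finset.Ioo 0 p, ((p.choose k / p : ℕ) : ℤ) • A ^ (p - k), ?_, ?_⟩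
    · intro i j hij
      rw [Matrix.sum_apply]
      apply Finset.sum_eq_zero
      intro k hk
      rw [Finset.mem_Ioo] at hk
      rw [Matrix.smul_apply,
        UnitriAux.pow_support hSUA (p - k) i j (by rw [Fin.le_def] at hij; omega), smul_zero]
    · rw [hpow, hMg, hexp, one_pow, UnitriAux.pow_eq_zero hSUA hnp, add_zero]
      have step1 : ∀ k ∈ Finset.Ioo 0 p,
          (1 : UnitriAux.Mat n) ^ k * A ^ (p - k) * ((p.choose k / p : ℕ) : UnitriAux.Mat n)
            = ((p.choose k / p : ℕ) : ℤ) • A ^ (p - k) := by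
        intro k _
        rw [one_pow, one_mul, ← (Nat.cast_commute (p.choose k / p) (A ^ (p - k))).eq,
          ← nsmul_eq_mul, ← natCast_zsmul]
      rw [Finset.sum_congr rfl step1, ← nsmul_eq_mul, ← natCast_zsmul, Finset.smul_sum]
  have hmulSU : ∀ (X Y : UnitriAux.Mat n), (∀ i j : Fin n, j ≤ i → X i j = 0) →
      (∀ i j : Fin n, (j : ℕ) < (i : ℕ) → Y i j = 0) →
      ∀ i j : Fin n, j ≤ i → (X * Y) i j = 0 := by
    intro X Y hX hY i j hij
    rw [Matrix.mul_apply]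
    apply Finset.sum_eq_zero
    intro l _
    by_cases hl : l ≤ i
    · rw [hX i l hl, zero_mul]
    · rw [Fin.le_def, not_le] at hl
      rw [Fin.le_def] at hij
      rw [hY l j (by omega), mul_zero]
  set K : Subgroup Γ :=
    { carrier := {y : Γ | ∃ B : Matrix (Fin n) (Fin n) ℤ,
        (∀ i j : Fin n, j ≤ i → B i j = 0) ∧
        ((y : GL (Fin n) ℤ) : Matrix (Fin n) (Fin n) ℤ) = 1 + (p : ℤ) • B}
      one_mem' := ⟨0, fun i j _ => rfl, by simp⟩
      mul_mem' := by
        rintro y z ⟨B, hB, hMB⟩ ⟨C, hC, hMC⟩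
        refine ⟨B + C + (p : ℤ) • (B * C), ?_, ?_⟩
        · intro i j hij
          rw [Matrix.add_apply, Matrix.add_apply, Matrix.smul_apply, hB i j hij, hC i j hij,
            hmulSU B C hB (fun i j h => hC i j (by rw [Fin.le_def]; omega)) i j hij,
            smul_zero, add_zero, add_zero]
        · have hc : (((y * z : Γ) : GL (Fin n) ℤ) : UnitriAux.Mat n)
              = ((y : GL (Fin n) ℤ) : UnitriAux.Mat n) * ((z : GL (Fin n) ℤ) : UnitriAux.Mat n) :=
            rfl
          rw [hc, hMB, hMC, add_mul, one_mul, mul_add, mul_one, smul_mul_assoc, mul_smul_comm]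
          module
      inv_mem' := by
        rintro y ⟨B, hB, hMB⟩
        set N : UnitriAux.Mat n := (((y⁻¹ : Γ) : GL (Fin n) ℤ) : UnitriAux.Mat n) with hN
        obtain ⟨hdiag, hlow⟩ := (hΓ _).1 (y⁻¹ : Γ).2
        have key : ((y : GL (Fin n) ℤ) : UnitriAux.Mat n) * N = 1 := by
          have h0 : (y : GL (Fin n) ℤ) * ((y⁻¹ : Γ) : GL (Fin n) ℤ) = 1 := by
            rw [show ((y⁻¹ : Γ) : GL (Fin n) ℤ) = (y : GL (Fin n) ℤ)⁻¹ from rfl, mul_inv_cancel]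
          calc ((y : GL (Fin n) ℤ) : UnitriAux.Mat n) * N
              = (((y : GL (Fin n) ℤ) * ((y⁻¹ : Γ) : GL (Fin n) ℤ) : GL (Fin n) ℤ)
                  : UnitriAux.Mat n) := (Units.val_mul _ _).symm
            _ = ((1 : GL (Fin n) ℤ) : UnitriAux.Mat n) := by rw [h0]
            _ = 1 := Units.val_one
        rw [hMB, add_mul, one_mul, smul_mul_assoc] at key
        refine ⟨-(B * N), ?_, ?_⟩
        · intro i j hij
          rw [Matrix.neg_apply,
            hmulSU B N hB (fun a b h => hlow a b (by rw [Fin.lt_def]; omega)) i j hij, neg_zero]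
        · rw [smul_neg, ← sub_eq_add_neg]
          exact eq_sub_of_add_eq key } with hK
  apply Set.Subset.antisymm
  · intro x hx
    have hx' : x ∈ K := by
      refine (Subgroup.closure_le K).2 ?_ hx
      rintro s ⟨g, rfl⟩
      exact pth g
    exact hx'
  · rintro x ⟨B, hB, hM⟩
    exact UnitriAux.clear n p Γ hΓ
      ((Finset.univ.filter fun q : Fin n × Fin n =>
        B q.1 q.2 ≠ 0 ∧ (q.2 : ℕ) = (q.1 : ℕ) + 1).card + (n - 1) * (n + 1))
      1 le_rfl x B hM (fun i j h => hB i j (by rw [Fin.le_def]; omega)) le_rfl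
end

section
/- Let G = B ⋊_Φ A, let J ⊴ A and K ⊴ B be normal subgroups such that (i) Φ(a)(K) ⊆ K for all a ∈ A, and (ii) Φ(j)(b) ∈ bK for all j ∈ J, b ∈ B. Then K ⋊ J is a normal subgroup of G, the induced action Ψ(aJ)(bK) = Φ(a)(b)K is well-defined, and G/(K ⋊ J) ≅ (B/K) ⋊_Ψ (A/J). -/
section Aux

variable {A B : Type*} [Group A] [Group B]

/-- The induced automorphism action on the quotient. -/
def autQuot (Φ : A →* MulAut B) (K : Subgroup B) [K.Normal]
    (h1 : ∀ a : A, ∀ k ∈ K, Φ a k ∈ K) : A →* MulAut (B ⧸ K) where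
  toFun a := MonoidHom.toMulEquiv
    (QuotientGroup.map K K (Φ a) (fun k hk => h1 a k hk))
    (QuotientGroup.map K K (Φ a⁻¹) (fun k hk => h1 a⁻¹ k hk))
    (by
      ext b
      show ((Φ a⁻¹ (Φ a b) : B) : B ⧸ K) = (b : B ⧸ K)
      simp [QuotientGroup.map_mk])
    (by
      ext b
      show ((Φ a (Φ a⁻¹ b) : B) : B ⧸ K) = (b : B ⧸ K)
      simp [QuotientGroup.map_mk])
  map_one' := by
    ext b
    refine Quotient.inductionOn b fun b => ?_
    simp [QuotientGroup.map_mk]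
  map_mul' a a' := by
    ext b
    refine Quotient.inductionOn b fun b => ?_
    show ((Φ (a * a') b : B) : B ⧸ K) = ((Φ a (Φ a' b) : B) : B ⧸ K)
    simp [QuotientGroup.map_mk]

@[simp]
lemma autQuot_mk (Φ : A →* MulAut B) (K : Subgroup B) [K.Normal]
    (h1 : ∀ a : A, ∀ k ∈ K, Φ a k ∈ K) (a : A) (b : B) :
    autQuot Φ K h1 a (b : B ⧸ K) = ((Φ a b : B) : B ⧸ K) := rfl

end Aux

/-- If `J ⊴ A`, `K ⊴ B`, the action of `A` preserves `K` and every element of `J`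
acts trivially on `B/K`, then `K ⋊ J` is normal in `B ⋊[Φ] A`, the induced action
`Ψ(aJ)(bK) = Φ(a)(b)K` is well-defined, and `(B ⋊[Φ] A)/(K ⋊ J) ≅ (B/K) ⋊[Ψ] (A/J)`. -/
theorem semidirect_quotient_iso {A B : Type*} [Group A] [Group B]
    (Φ : A →* MulAut B) (J : Subgroup A) (K : Subgroup B)
    [hJ : J.Normal] [hK : K.Normal]
    (h1 : ∀ a : A, ∀ k ∈ K, Φ a k ∈ K)
    (h2 : ∀ j ∈ J, ∀ b : B, b⁻¹ * Φ j b ∈ K) :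
    ∃ P : Subgroup (B ⋊[Φ] A),
      (∀ x : B ⋊[Φ] A, x ∈ P ↔ x.left ∈ K ∧ x.right ∈ J) ∧
      ∃ hP : P.Normal, ∃ Ψ : A ⧸ J →* MulAut (B ⧸ K),
        (∀ (a : A) (b : B), Ψ ((a : A ⧸ J)) ((b : B ⧸ K)) = ((Φ a b : B) : B ⧸ K)) ∧
        (letI := hP; Nonempty (((B ⋊[Φ] A) ⧸ P) ≃* ((B ⧸ K) ⋊[Ψ] (A ⧸ J)))) := by
  -- the induced action of `A ⧸ J`
  have hker : ∀ j ∈ J, autQuot Φ K h1 j = 1 := by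
    intro j hj
    ext b
    refine Quotient.inductionOn b ?_
    intro b
    show ((Φ j b : B) : B ⧸ K) = (b : B ⧸ K)
    rw [QuotientGroup.eq]
    simpa [mul_inv_rev] using K.inv_mem (h2 j hj b)
  let Ψ : A ⧸ J →* MulAut (B ⧸ K) := QuotientGroup.lift J (autQuot Φ K h1) hker
  have hΨ : ∀ (a : A) (b : B), Ψ ((a : A ⧸ J)) ((b : B ⧸ K)) = ((Φ a b : B) : B ⧸ K) :=
    fun a b => rfl
  -- the projection homomorphism
  have hcomm : ∀ a : A,
      (QuotientGroup.mk' K).comp (Φ a).toMonoidHom =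
        (Ψ ((QuotientGroup.mk' J) a)).toMonoidHom.comp (QuotientGroup.mk' K) := by
    intro a
    ext b
    exact (hΨ a b).symm
  let f : (B ⋊[Φ] A) →* ((B ⧸ K) ⋊[Ψ] (A ⧸ J)) :=
    SemidirectProduct.map (QuotientGroup.mk' K) (QuotientGroup.mk' J) hcomm
  have hf : Function.Surjective f := by
    rintro ⟨b, a⟩
    obtain ⟨b, rfl⟩ := QuotientGroup.mk'_surjective K b
    obtain ⟨a, rfl⟩ := QuotientGroup.mk'_surjective J a
    exact ⟨⟨b, a⟩, rfl⟩
  refine ⟨f.ker, ?_, inferInstance, Ψ, hΨ,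
    ⟨QuotientGroup.quotientKerEquivOfSurjective f hf⟩⟩
  intro x
  constructor
  · intro hx
    have h := SemidirectProduct.ext_iff.mp hx
    constructor
    · simpa [f, QuotientGroup.eq_one_iff] using h.1
    · simpa [f, QuotientGroup.eq_one_iff] using h.2
  · rintro ⟨hl, hr⟩
    refine SemidirectProduct.ext ?_ ?_
    · simpa [f, QuotientGroup.eq_one_iff] using hl
    · simpa [f, QuotientGroup.eq_one_iff] using hr
end

section
/- Let p be a prime, m ∈ ℤ_p \ {0} with multiplicative order r modulo p, and let Γ = ℤ_p ⋊ ℤ_r where the generator of ℤ_r acts on ℤ_p by multiplication by m. If N ⊴ Γ is a normal subgroup such that Γ/N has a nilpotent subgroup of index strictly less than r, then N ⊇ ℤ_p × {0}. -/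
open scoped commutatorElement

/-- If `x ∈ ⟨a⟩` with `orderOf a = p` prime and `x ≠ 1`, then `a ∈ ⟨x⟩`. -/
lemma aux_mem_zpowers {G : Type*} [Group G] {p : ℕ} (hp : p.Prime) {a x : G}
    (ha : orderOf a = p) (hx : x ∈ Subgroup.zpowers a) (hx1 : x ≠ 1) :
    a ∈ Subgroup.zpowers x := by
  obtain ⟨z, rfl⟩ := Subgroup.mem_zpowers_iff.mp hx
  have hpz : ¬ ((p : ℤ) ∣ z) := by
    intro hdvd
    exact hx1 (orderOf_dvd_iff_zpow_eq_one.mp (by rw [ha]; exact hdvd))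
  have hcop : IsCoprime (z) ((p : ℤ)) := by
    rw [Int.isCoprime_iff_gcd_eq_one]
    have h1 : ¬ p ∣ z.natAbs := by
      intro h
      exact hpz (Int.dvd_natAbs.mp (Int.natCast_dvd_natCast.mpr h))
    have := (Nat.Prime.coprime_iff_not_dvd hp).mpr h1
    unfold Int.gcd
    simpa [Int.natAbs_natCast] using (Nat.coprime_comm.mp this)
  obtain ⟨c, d, hcd⟩ := hcop
  refine Subgroup.mem_zpowers_iff.mpr ⟨c, ?_⟩
  have hap : a ^ (p : ℤ) = 1 := by
    rw [zpow_natCast, ← ha, pow_orderOf_eq_one]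
  calc (a ^ z) ^ c = a ^ (z * c) := by rw [← zpow_mul]
    _ = a ^ (z * c) * (a ^ (p : ℤ)) ^ d := by rw [hap, one_zpow, mul_one]
    _ = a ^ (z * c + (p : ℤ) * d) := by rw [← zpow_mul, ← zpow_add]
    _ = a ^ (1 : ℤ) := by rw [show z * c + (p : ℤ) * d = 1 by linarith]
    _ = a := zpow_one a

/-- In a nilpotent group, no nontrivial element lies in the cyclic subgroup
generated by one of its own commutators. -/
lemma nilp_key {G : Type*} [Group G] (hG : Group.IsNilpotent G) {x y : G}
    (hx1 : x ≠ 1) (hc : x ∈ Subgroup.zpowers ⁅x, y⁆) : False := by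
  have hall : ∀ n, x ∈ Subgroup.lowerCentralSeries (⊤ : Subgroup G) n := by
    intro n
    induction n with
    | zero => rw [Subgroup.lowerCentralSeries_zero]; exact Subgroup.mem_top x
    | succ n ih =>
      have h1 : ⁅x, y⁆ ∈ Subgroup.lowerCentralSeries (⊤ : Subgroup G) (n + 1) := by
        rw [Subgroup.lowerCentralSeries_succ]
        exact Subgroup.subset_closure ⟨x, ih, y, Subgroup.mem_top y, rfl⟩
      exact Subgroup.zpowers_le.mpr h1 hc
  obtain ⟨n, hn⟩ := Subgroup.nilpotent_iff_lowerCentralSeries.mp hG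
  exact hx1 (Subgroup.mem_bot.mp (hn ▸ hall n))

/-- Let `p` be a prime and `m` an integer not divisible by `p`, with multiplicative
order `r` mod `p`, and let `Γ = ℤ_p ⋊ ℤ_r` be the corresponding metacyclic group
(presented here by generators `a` of order `p` and `t` of order `r` with
`t a t⁻¹ = a^m` and `|Γ| = p r`).  If `N ⊴ Γ` is such that `Γ/N` has a nilpotent
subgroup of index `< r`, then `N` contains `ℤ_p = ⟨a⟩`. -/
theorem normal_subgroup_contains_Zp {Γ : Type*} [Group Γ]
    (p m : ℕ) (hp : p.Prime) (hm : ¬ (p ∣ m)) (r : ℕ)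
    (hr : r = orderOf (m : ZMod p))
    (a t : Γ) (ha : orderOf a = p) (ht : orderOf t = r)
    (hrel : t * a * t⁻¹ = a ^ m)
    (hgen : Subgroup.closure ({a, t} : Set Γ) = ⊤)
    (hcard : Nat.card Γ = p * r)
    (N : Subgroup Γ) [hN : N.Normal]
    (hnil : ∃ H : Subgroup (Γ ⧸ N), H.index < r ∧ Group.IsNilpotent H) :
    Subgroup.zpowers a ≤ N := by
  haveI : Fact p.Prime := ⟨hp⟩
  have hp2 : 2 ≤ p := hp.two_le
  have hm0 : (m : ZMod p) ≠ 0 := by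
    simpa [ZMod.natCast_eq_zero_iff] using hm
  have hrp : r ∣ p - 1 := by
    rw [hr]
    exact orderOf_dvd_of_pow_eq_one (ZMod.pow_card_sub_one_eq_one hm0)
  have hp1 : 0 < p - 1 := by omega
  have hr0 : 0 < r := by
    rcases Nat.eq_zero_or_pos r with h | h
    · rw [h] at hrp; omega
    · exact h
  have hrltp : r < p := by
    have := Nat.le_of_dvd hp1 hrp; omega
  have hmr : (m : ZMod p) ^ r = 1 := by rw [hr]; exact pow_orderOf_eq_one _
  have hmpos : 0 < m := by
    rcases Nat.eq_zero_or_pos m with h | h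
    · exact absurd (h ▸ dvd_zero p) hm
    · exact h
  -- conjugation lemmas
  have conj1 : ∀ k : ℕ, t * a ^ k * t⁻¹ = a ^ (k * m) := by
    intro k
    rw [← conj_pow, hrel, ← pow_mul, mul_comm]
  have conjJ : ∀ j k : ℕ, t ^ j * a ^ k * (t ^ j)⁻¹ = a ^ (k * m ^ j) := by
    intro j
    induction j with
    | zero => intro k; simp
    | succ j ih =>
      intro k
      have h1 : t ^ (j + 1) * a ^ k * (t ^ (j + 1))⁻¹
          = t * (t ^ j * a ^ k * (t ^ j)⁻¹) * t⁻¹ := by group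
      rw [h1, ih k, conj1, pow_succ, ← mul_assoc]
  -- every element has the form a^i * t^j
  have tpow_r : t ^ r = 1 := by rw [← ht]; exact pow_orderOf_eq_one t
  have hT : ∀ g : Γ, ∃ i j : ℕ, g = a ^ i * t ^ j := by
    let T : Subgroup Γ :=
      { carrier := {g | ∃ i j : ℕ, g = a ^ i * t ^ j}
        one_mem' := ⟨0, 0, by simp⟩
        mul_mem' := by
          rintro x y ⟨i, j, rfl⟩ ⟨k, l, rfl⟩
          refine ⟨i + k * m ^ j, j + l, ?_⟩
          calc a ^ i * t ^ j * (a ^ k * t ^ l)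
              = a ^ i * (t ^ j * a ^ k * (t ^ j)⁻¹) * (t ^ j * t ^ l) := by group
            _ = a ^ i * a ^ (k * m ^ j) * (t ^ j * t ^ l) := by rw [conjJ j k]
            _ = a ^ (i + k * m ^ j) * t ^ (j + l) := by rw [← pow_add, ← pow_add]
        inv_mem' := by
          rintro x ⟨i, j, rfl⟩
          refine ⟨(p - 1) * i * m ^ ((r - 1) * j), (r - 1) * j, ?_⟩
          have key : (a ^ i * t ^ j) *
              (a ^ ((p - 1) * i * m ^ ((r - 1) * j)) * t ^ ((r - 1) * j)) = 1 := by
            have hmul : (a ^ i * t ^ j) *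
                (a ^ ((p - 1) * i * m ^ ((r - 1) * j)) * t ^ ((r - 1) * j))
                = a ^ (i + (p - 1) * i * m ^ ((r - 1) * j) * m ^ j)
                  * t ^ (j + (r - 1) * j) := by
              calc a ^ i * t ^ j * (a ^ ((p - 1) * i * m ^ ((r - 1) * j)) * t ^ ((r - 1) * j))
                  = a ^ i * (t ^ j * a ^ ((p - 1) * i * m ^ ((r - 1) * j)) * (t ^ j)⁻¹)
                    * (t ^ j * t ^ ((r - 1) * j)) := by group
                _ = a ^ i * a ^ ((p - 1) * i * m ^ ((r - 1) * j) * m ^ j)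
                    * (t ^ j * t ^ ((r - 1) * j)) := by rw [conjJ]
                _ = a ^ (i + (p - 1) * i * m ^ ((r - 1) * j) * m ^ j)
                    * t ^ (j + (r - 1) * j) := by rw [← pow_add, ← pow_add]
            rw [hmul]
            have hexpt : j + (r - 1) * j = r * j := by
              have : 1 + (r - 1) = r := by omega
              calc j + (r - 1) * j = (1 + (r - 1)) * j := by ring
                _ = r * j := by rw [this]
            have ht1 : t ^ (j + (r - 1) * j) = 1 := by
              rw [hexpt, pow_mul, tpow_r, one_pow]
            have hexpa : (r - 1) * j + j = r * j := by
              have : (r - 1) + 1 = r := by omega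
              calc (r - 1) * j + j = ((r - 1) + 1) * j := by ring
                _ = r * j := by rw [this]
            have ha1 : a ^ (i + (p - 1) * i * m ^ ((r - 1) * j) * m ^ j) = 1 := by
              apply orderOf_dvd_iff_pow_eq_one.mp
              rw [ha]
              apply (ZMod.natCast_eq_zero_iff _ _).mp
              push_cast [Nat.cast_sub hp.one_le]
              rw [ZMod.natCast_self]
              have hmm : (m : ZMod p) ^ ((r - 1) * j) * (m : ZMod p) ^ j = 1 := by
                rw [← pow_add, hexpa, pow_mul, hmr, one_pow]
              linear_combination (-(i : ZMod p)) * hmm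
            rw [ht1, ha1, one_mul]
          exact inv_eq_of_mul_eq_one_right key }
    intro g
    have hle : Subgroup.closure ({a, t} : Set Γ) ≤ T := by
      apply (Subgroup.closure_le T).mpr
      rintro x hx
      rcases hx with rfl | rfl
      · exact ⟨1, 0, by simp⟩
      · exact ⟨0, 1, by simp⟩
    exact hle (hgen ▸ Subgroup.mem_top g)
  -- conjugation of a by a general element
  have hconjA : ∀ i j : ℕ, (a ^ i * t ^ j) * a * (a ^ i * t ^ j)⁻¹ = a ^ (m ^ j) := by
    intro i j
    have h1 : (a ^ i * t ^ j) * a * (a ^ i * t ^ j)⁻¹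
        = a ^ i * (t ^ j * a ^ 1 * (t ^ j)⁻¹) * (a ^ i)⁻¹ := by group
    rw [h1, conjJ j 1, one_mul, pow_mul_comm, mul_inv_cancel_right]
  -- ⟨a⟩ is normal
  have hAnormal : (Subgroup.zpowers a).Normal := by
    constructor
    intro n hn g
    obtain ⟨z, rfl⟩ := Subgroup.mem_zpowers_iff.mp hn
    obtain ⟨i, j, rfl⟩ := hT g
    rw [show ((a ^ i * t ^ j) * a ^ z * (a ^ i * t ^ j)⁻¹ : Γ)
        = ((a ^ i * t ^ j) * a * (a ^ i * t ^ j)⁻¹) ^ z from conj_zpow.symm, hconjA]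
    exact Subgroup.zpow_mem _ (Subgroup.npow_mem_zpowers a (m ^ j)) z
  haveI := hAnormal
  -- main case split
  by_cases haN : a ∈ N
  · exact Subgroup.zpowers_le.mpr haN
  exfalso
  have hfin : Finite Γ := Nat.finite_of_card_ne_zero (by rw [hcard]; positivity)
  obtain ⟨H, hHi, hHnil⟩ := hnil
  set π := QuotientGroup.mk' N with hπ
  set K := H.comap π with hK
  have hKi : K.index = H.index := Subgroup.index_comap_of_surjective H (QuotientGroup.mk'_surjective N)
  have hKir : K.index < r := by rw [hKi]; exact hHi
  have hKcard : Nat.card K * K.index = p * r := by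
    rw [Subgroup.card_mul_index, hcard]
  have hKipos : 0 < K.index := by
    rcases Nat.eq_zero_or_pos K.index with h | h
    · rw [h, mul_zero] at hKcard; exfalso; nlinarith
    · exact h
  have hpK : p ∣ Nat.card K := by
    have hd : p ∣ Nat.card K * K.index := by rw [hKcard]; exact dvd_mul_right p r
    rcases (Nat.Prime.dvd_mul hp).mp hd with h | h
    · exact h
    · exfalso; have := Nat.le_of_dvd hKipos h; omega
  have hKbig : p < Nat.card K := by
    by_contra h
    push_neg at h
    have h1 : Nat.card K * K.index ≤ p * K.index := Nat.mul_le_mul_right _ h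
    have h2 : p * K.index < p * r := mul_lt_mul_of_pos_left hKir hp.pos
    omega
  -- Cauchy: element of order p in K
  obtain ⟨x, hx⟩ := exists_prime_orderOf_dvd_card' (G := K) p hpK
  have hb : orderOf (x : Γ) = p := by
    rw [← hx]
    exact orderOf_injective K.subtype K.subtype_injective x
  have hbK : (x : Γ) ∈ K := x.2
  -- it lies in ⟨a⟩
  set A := Subgroup.zpowers a with hA
  have hAcard : Nat.card A = p := by rw [hA, Nat.card_zpowers, ha]
  have hQAcard : Nat.card (Γ ⧸ A) = r := by
    have h1 := Subgroup.card_eq_card_quotient_mul_card_subgroup A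
    rw [hcard, hAcard] at h1
    have h2 : r * p = Nat.card (Γ ⧸ A) * p := by rw [← h1]; ring
    exact (Nat.eq_of_mul_eq_mul_right hp.pos h2).symm
  have hbne : (x : Γ) ≠ 1 := by
    intro h
    rw [h, orderOf_one] at hb
    omega
  have hbA : (x : Γ) ∈ A := by
    have hd1 : orderOf (((x : Γ) : Γ ⧸ A)) ∣ p := by
      rw [← hb]
      exact orderOf_map_dvd (QuotientGroup.mk' A) (x : Γ)
    have hd2 : orderOf (((x : Γ) : Γ ⧸ A)) ∣ r := by
      rw [← hQAcard]
      exact orderOf_dvd_natCard _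
    have hcop : Nat.Coprime p r := (Nat.Prime.coprime_iff_not_dvd hp).mpr (Nat.not_dvd_of_pos_of_lt hr0 hrltp)
    have : orderOf (((x : Γ) : Γ ⧸ A)) = 1 :=
      Nat.dvd_one.mp (hcop ▸ Nat.dvd_gcd hd1 hd2)
    have h1 : (((x : Γ) : Γ ⧸ A)) = 1 := orderOf_eq_one_iff.mp this
    exact (QuotientGroup.eq_one_iff _).mp h1
  have haK : a ∈ K := by
    have := aux_mem_zpowers hp ha hbA hbne
    obtain ⟨z, hz⟩ := Subgroup.mem_zpowers_iff.mp this
    rw [← hz]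
    exact Subgroup.zpow_mem K hbK z
  -- find g ∈ K, g ∉ A
  have hnotle : ¬ (K ≤ A) := by
    intro hle
    have := Subgroup.card_le_of_le hle
    omega
  obtain ⟨g, hgK, hgA⟩ := SetLike.not_le_iff_exists.mp hnotle
  obtain ⟨i, j, rfl⟩ := hT g
  have hj : ¬ r ∣ j := by
    intro hdvd
    apply hgA
    have htj : t ^ j = 1 := orderOf_dvd_iff_pow_eq_one.mp (by rw [ht]; exact hdvd)
    rw [htj, mul_one]
    exact Subgroup.npow_mem_zpowers a i
  set k := m ^ j with hk
  have hk1 : 1 ≤ k := Nat.one_le_pow j m hmpos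
  have hkZ : (m : ZMod p) ^ j ≠ 1 := by
    intro h
    exact hj (hr ▸ orderOf_dvd_of_pow_eq_one h)
  have hmp : ¬ p ∣ (k - 1) := by
    intro hd
    apply hkZ
    have h1 : ((k - 1 : ℕ) : ZMod p) = 0 := (ZMod.natCast_eq_zero_iff _ _).mpr hd
    rw [Nat.cast_sub hk1, hk] at h1
    push_cast at h1
    exact sub_eq_zero.mp h1
  have hga : (a ^ i * t ^ j) * a * (a ^ i * t ^ j)⁻¹ = a ^ k := hconjA i j
  -- move to the quotient, inside H
  have hπa : π a ∈ H := Subgroup.mem_comap.mp haK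
  have hπg : π (a ^ i * t ^ j) ∈ H := Subgroup.mem_comap.mp hgK
  have hrelQ : π (a ^ i * t ^ j) * π a * (π (a ^ i * t ^ j))⁻¹ = (π a) ^ k := by
    have := congrArg π hga
    simpa [map_mul, map_inv, map_pow] using this
  have hπa1 : π a ≠ 1 := by
    intro h
    exact haN ((QuotientGroup.eq_one_iff a).mp h)
  have hπaord : orderOf (π a) = p := by
    have hdvd : orderOf (π a) ∣ p := by
      rw [← ha]
      exact orderOf_map_dvd π a
    rcases (Nat.Prime.eq_one_or_self_of_dvd hp _ hdvd) with h | h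
    · exfalso; exact hπa1 (orderOf_eq_one_iff.mp h)
    · exact h
  set X : H := ⟨π a, hπa⟩ with hX
  set Y : H := ⟨π (a ^ i * t ^ j), hπg⟩ with hY
  have hXord : orderOf X = p := by
    rw [← hπaord]
    exact (orderOf_injective H.subtype H.subtype_injective X).symm
  have hX1 : X ≠ 1 := by
    intro h
    apply hπa1
    exact congrArg Subtype.val h
  have hXY : Y * X * Y⁻¹ = X ^ k := by
    apply Subtype.ext
    push_cast
    exact hrelQ
  have hXk1 : X ^ (k - 1) ≠ 1 := by
    intro h
    have := orderOf_dvd_of_pow_eq_one h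
    rw [hXord] at this
    exact hmp this
  have hmemz : X ∈ Subgroup.zpowers (X ^ (k - 1)) :=
    aux_mem_zpowers hp hXord (Subgroup.npow_mem_zpowers X (k - 1)) hXk1
  have hcommEq : ⁅X, Y⁆ = (X ^ (k - 1))⁻¹ := by
    have h2 : Y * X * Y⁻¹ * X⁻¹ = X ^ (k - 1) := by
      rw [hXY]
      have hXk : X ^ k = X ^ (k - 1) * X := by
        rw [← pow_succ]
        congr 1
        omega
      rw [hXk, mul_inv_cancel_right]
    have h1 : ⁅X, Y⁆ = (Y * X * Y⁻¹ * X⁻¹)⁻¹ := by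
      rw [commutatorElement_def]; group
    rw [h1, h2]
  have hfinal : X ∈ Subgroup.zpowers ⁅X, Y⁆ := by
    rw [hcommEq, Subgroup.zpowers_inv]
    exact hmemz
  exact nilp_key hHnil hX1 hfinal
end

section
/- Let A, B, C ∈ GL(n, ℤ) (viewed over ℂ) with A commuting with both B and C, and suppose A has an eigenvalue α with |α| ≠ 1. If A^r B C = C B for some r ∈ ℤ, then r = 0. -/
/-!
The eigenspace `W` of `A` for `α` is nonzero and, since `A` commutes with `B` and `C`,
invariant under both. On `W` the power `A ^ r` acts as the scalar `α ^ r`, so restricting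
`A ^ r B C = C B` to `W` and taking determinants gives
`α ^ (r · dim W) · det B|_W · det C|_W = det C|_W · det B|_W`. The restricted determinants are
units, hence `α ^ (r · dim W) = 1`; as `|α| ≠ 1` and `dim W ≠ 0`, this forces `r = 0`.
-/

open Module Module.End Set

namespace Module.End

lemma pow_apply_of_mem_eigenspace {R M : Type*} [CommRing R] [AddCommGroup M] [Module R M]
    {f : End R M} {μ : R} {x : M} (hx : x ∈ f.eigenspace μ) (m : ℕ) :
    (f ^ m) x = μ ^ m • x := by
  rcases eq_or_ne x 0 with rfl | hx0
  · simp
  · exact HasEigenvector.pow_apply ⟨hx, hx0⟩ m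

variable {K V : Type*} [Field K] [AddCommGroup V] [Module K V] [FiniteDimensional K V]

lemma isUnit_det_restrict {f : End K V} (hf : IsUnit f) {W : Submodule K V} (hW : MapsTo f W W) :
    IsUnit (f.restrict hW).det :=
  isUnit_of_mul_isUnit_left (f.det_eq_det_mul_det W hW ▸ LinearMap.isUnit_det f hf)

theorem pow_mul_finrank_eigenspace_eq_one {a b c : End K V} (hab : Commute a b)
    (hac : Commute a c) (hb : IsUnit b) (hc : IsUnit c) (α : K) {m : ℕ}
    (h : a ^ m * (b * c) = c * b) :
    α ^ (m * finrank K (a.eigenspace α)) = 1 := by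
  set W := a.eigenspace α
  have hbW : MapsTo b W W := mapsTo_genEigenspace_of_comm hab α 1
  have hcW : MapsTo c W W := mapsTo_genEigenspace_of_comm hac α 1
  have hrestrict :
      α ^ m • (b.restrict hbW * c.restrict hcW) = c.restrict hcW * b.restrict hbW := by
    ext ⟨x, hx⟩
    change α ^ m • b (c x) = c (b x)
    rw [← pow_apply_of_mem_eigenspace (hbW (hcW hx))]
    exact LinearMap.congr_fun h x
  have hdet := congrArg LinearMap.det hrestrict
  rw [LinearMap.det_smul, map_mul, map_mul, ← pow_mul,
    mul_comm (LinearMap.det (c.restrict hcW))] at hdet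
  exact ((isUnit_det_restrict hb hbW).mul (isUnit_det_restrict hc hcW)).mul_eq_right.1 hdet

theorem zpow_mul_finrank_eigenspace_eq_one {a b c : (End K V)ˣ} (hab : Commute a b)
    (hac : Commute a c) (α : K) {r : ℤ} (h : a ^ r * b * c = c * b) :
    α ^ (r * finrank K ((a : End K V).eigenspace α)) = 1 := by
  obtain ⟨m, rfl | rfl⟩ := Int.eq_nat_or_neg r
  · have h' : (a : End K V) ^ m * (b * c) = c * b := by
      simpa [mul_assoc] using congrArg Units.val h
    exact_mod_cast
      pow_mul_finrank_eigenspace_eq_one hab.units_val hac.units_val b.isUnit c.isUnit α h'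
  · have h' : a ^ m * (c * b) = b * c := by
      rw [← h]; group
    have := pow_mul_finrank_eigenspace_eq_one hac.units_val hab.units_val c.isUnit b.isUnit α
      (by simpa using congrArg Units.val h')
    rw [neg_mul, zpow_neg, ← Nat.cast_mul, zpow_natCast, this, inv_one]

end Module.End

/-- If `A, B, C ∈ GL(n, ℤ)` with `A` commuting with `B` and `C`, `A` has a complex
eigenvalue of absolute value `≠ 1`, and `A^r B C = C B` for some integer `r`, then
`r = 0`. -/
theorem commutativity_transitive_aux (n : ℕ)
    (A B C : (Matrix (Fin n) (Fin n) ℤ)ˣ)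
    (hAB : A * B = B * A) (hAC : A * C = C * A)
    (α : ℂ)
    (hα : ∃ v : Fin n → ℂ, v ≠ 0 ∧
      ((A : Matrix (Fin n) (Fin n) ℤ).map (fun z : ℤ => (z : ℂ))).mulVec v = α • v)
    (habs : ‖α‖ ≠ 1)
    (r : ℤ) (h : A ^ r * B * C = C * B) :
    r = 0 := by
  obtain ⟨v, hv, hAv⟩ := hα
  let φ : (Matrix (Fin n) (Fin n) ℤ)ˣ →* (End ℂ (Fin n → ℂ))ˣ := Units.map <|
    (Matrix.toLinAlgEquiv' : Matrix (Fin n) (Fin n) ℂ ≃ₐ[ℂ] _).toMonoidHom.comp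
      (Int.castRingHom ℂ).mapMatrix.toMonoidHom
  have hvW : v ∈ (φ A : End ℂ (Fin n → ℂ)).eigenspace α := mem_eigenspace_iff.2 hAv
  have hd : finrank ℂ ((φ A : End ℂ (Fin n → ℂ)).eigenspace α) ≠ 0 :=
    Submodule.finrank_eq_zero.not.2 ((Submodule.ne_bot_iff _).2 ⟨v, hvW, hv⟩)
  have hpow := zpow_mul_finrank_eigenspace_eq_one (Commute.map hAB φ) (Commute.map hAC φ) α
    (by simpa only [map_mul, map_zpow] using congrArg φ h)
  have hrd : r * finrank ℂ ((φ A : End ℂ (Fin n → ℂ)).eigenspace α) = 0 :=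
    (zpow_eq_one_iff_right₀ (norm_nonneg α) habs).1 (by rw [← norm_zpow, hpow, norm_one])
  exact (mul_eq_zero.1 hrd).resolve_right (by exact_mod_cast hd)
end

section
/- Let T be an automorphism of the ℤ-module ℤ^m all of whose (complex) eigenvalues equal 1. Then there exists a ℤ-basis v_1, …, v_m of ℤ^m with respect to which the matrix of T is upper triangular (necessarily with all diagonal entries 1). -/
open Submodule LinearMap

/-- A nilpotent endomorphism of a finite free `ℤ`-module admits a basis (indexed by a
finite linear order) in which it is strictly upper triangular. -/
lemma nilpotent_exists_triangular_basis (R : Type) [CommRing R] [IsDomain R]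
    [IsPrincipalIdealRing R] :
    ∀ (k : ℕ) (V : Type) [AddCommGroup V] [Module R V]
      [Module.Finite R V] [Module.Free R V] (f : V →ₗ[R] V), f ^ k = 0 →
      ∃ (ι : Type) (_ : Fintype ι) (_ : LinearOrder ι) (b : Module.Basis ι R V),
        ∀ j, f (b j) ∈ Submodule.span R (b '' {i | i < j}) := by
  intro k
  induction k with
  | zero =>
    intro V _ _ _ _ f hf
    have : Subsingleton V := by
      constructor
      intro a b
      have ha : (f ^ 0) a = 0 := by rw [hf]; rfl
      have hb : (f ^ 0) b = 0 := by rw [hf]; rfl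
      simp only [pow_zero, Module.End.one_apply] at ha hb
      rw [ha, hb]
    exact ⟨Fin 0, inferInstance, inferInstance, Module.Basis.empty V, fun j => j.elim0⟩
  | succ k IH =>
    intro V _ _ _ _ f hf
    by_cases hK : LinearMap.ker f = ⊥
    · -- f injective and nilpotent : V is trivial
      have hinj : Function.Injective f := ker_eq_bot.mp hK
      have hinj' : Function.Injective (⇑(f ^ (k+1))) := by
        rw [Module.End.coe_pow]
        exact Function.Injective.iterate hinj _
      have : Subsingleton V := by
        constructor
        intro a b
        apply hinj'
        rw [hf]; rfl
      exact ⟨Fin 0, inferInstance, inferInstance, Module.Basis.empty V, fun j => j.elim0⟩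
    · set K := LinearMap.ker f with hKdef
      have hfK : K ≤ K.comap f := by
        intro x hx
        simp only [Submodule.mem_comap, hKdef, LinearMap.mem_ker] at hx ⊢
        rw [hx, map_zero]
      set fbar := K.mapQ K f hfK with hfbardef
      have hcomm : ∀ x : V, fbar (K.mkQ x) = K.mkQ (f x) := fun x => by
        rw [hfbardef, Submodule.mkQ_apply, Submodule.mapQ_apply, Submodule.mkQ_apply]
      have hpow : ∀ (n : ℕ) (x : V), (fbar ^ n) (K.mkQ x) = K.mkQ ((f ^ n) x) := by
        intro n
        induction n with
        | zero => intro x; simp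
        | succ n ih =>
          intro x
          rw [pow_succ, pow_succ, Module.End.mul_apply, Module.End.mul_apply]
          rw [hcomm x, ih (f x)]
      have hfbar : fbar ^ k = 0 := by
        apply LinearMap.ext
        intro x
        obtain ⟨y, rfl⟩ := K.mkQ_surjective x
        rw [hpow k y]
        simp only [LinearMap.zero_apply]
        rw [Submodule.mkQ_apply, Submodule.Quotient.mk_eq_zero]
        show f ((f ^ k) y) = 0
        rw [← Module.End.mul_apply, ← pow_succ', hf, LinearMap.zero_apply]
      -- the quotient is finite and free
      have e := f.quotKerEquivRange
      haveI : Module.Finite R (V ⧸ K) := Module.Finite.quotient R _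
      haveI : Module.Free R (V ⧸ K) := Module.Free.of_equiv e.symm
      obtain ⟨ι₂, _, _, c, hc⟩ := IH (V ⧸ K) fbar hfbar
      -- a section of the quotient map
      obtain ⟨s, hs⟩ := K.mkQ.exists_rightInverse_of_surjective
        (by rw [Submodule.range_mkQ])
      have hsapp : ∀ q, K.mkQ (s q) = q := fun q => by
        have := LinearMap.ext_iff.mp hs q
        simpa using this
      have hsinj : Function.Injective s := by
        intro a b hab
        have := congrArg K.mkQ hab
        rwa [hsapp, hsapp] at this
      have hcompl : IsCompl K (LinearMap.range s) := by
        constructor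
        · rw [disjoint_iff_inf_le]
          rintro x ⟨hx1, q, rfl⟩
          have : K.mkQ (s q) = 0 := (Submodule.Quotient.mk_eq_zero K).mpr hx1
          rw [hsapp] at this
          simp [this]
        · rw [codisjoint_iff_le_sup]
          intro x _
          refine Submodule.mem_sup.mpr ⟨x - s (K.mkQ x), ?_, s (K.mkQ x), ⟨_, rfl⟩, by abel⟩
          rw [← Submodule.Quotient.mk_eq_zero K, ← Submodule.mkQ_apply, map_sub, hsapp, sub_self]
      -- basis of K
      haveI : Module.Free R K := inferInstance
      haveI : Module.Finite R K := inferInstance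
      let bK0 := Module.Free.chooseBasis R K
      let n₁ := Fintype.card (Module.Free.ChooseBasisIndex R K)
      let bK : Module.Basis (Fin n₁) R K := bK0.reindex (Fintype.equivFin _)
      -- basis of range s
      let bS : Module.Basis ι₂ R (LinearMap.range s) := c.map (LinearEquiv.ofInjective s hsinj)
      let b0 : Module.Basis (Fin n₁ ⊕ ι₂) R V :=
        (bK.prod bS).map (Submodule.prodEquivOfIsCompl _ _ hcompl)
      let b : Module.Basis (Fin n₁ ⊕ₗ ι₂) R V := b0.reindex toLex
      haveI : Fintype (Fin n₁ ⊕ₗ ι₂) := inferInstanceAs (Fintype (Fin n₁ ⊕ ι₂))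
      have hb_inl : ∀ i, b (toLex (Sum.inl i)) = (bK i : V) := by
        intro i
        simp only [b, Module.Basis.reindex_apply, Equiv.symm_apply_apply, b0, Module.Basis.map_apply,
          Module.Basis.prod_apply]
        simp [Submodule.coe_prodEquivOfIsCompl']
      have hb_inr : ∀ j, b (toLex (Sum.inr j)) = s (c j) := by
        intro j
        simp only [b, Module.Basis.reindex_apply, Equiv.symm_apply_apply, b0, Module.Basis.map_apply,
          Module.Basis.prod_apply]
        simp only [Submodule.coe_prodEquivOfIsCompl']
        simp [bS]
      refine ⟨Fin n₁ ⊕ₗ ι₂, inferInstance, inferInstance, b, ?_⟩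
      intro j
      -- membership of K in the relevant spans
      have hKle : ∀ (j₂ : ι₂), (K : Set V) ⊆
          ↑(Submodule.span R (b '' {i | i < toLex (Sum.inr j₂)})) := by
        intro j₂ x hx
        have hx' : (⟨x, hx⟩ : K) ∈ Submodule.span R (Set.range bK) := by
          rw [bK.span_eq]; trivial
        have := Submodule.mem_map_of_mem (f := K.subtype) hx'
        rw [Submodule.map_span] at this
        simp only [Submodule.coe_subtype] at this
        refine Submodule.span_mono ?_ this
        rintro _ ⟨_, ⟨i, rfl⟩, rfl⟩
        exact ⟨toLex (Sum.inl i), Sum.Lex.inl_lt_inr _ _, hb_inl i⟩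
      rcases hj : ofLex j with i | j₂
      · have hjj : j = toLex (Sum.inl i) := by
          rw [← hj]; rfl
        rw [hjj, hb_inl i]
        have : f (bK i : V) = 0 := (bK i).2
        rw [this]
        exact Submodule.zero_mem _
      · have hjj : j = toLex (Sum.inr j₂) := by
          rw [← hj]; rfl
        subst hjj
        rw [hb_inr j₂]
        set x := s (c j₂) with hxdef
        set S := Submodule.span R (b '' {i | i < toLex (Sum.inr j₂)}) with hSdef
        have hmk : K.mkQ (f x) = fbar (c j₂) := by
          rw [← hcomm x, hxdef, hsapp]
        have h1 : s (K.mkQ (f x)) ∈ S := by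
          rw [hmk]
          have := hc j₂
          have h2 : s (fbar (c j₂)) ∈ Submodule.map s (Submodule.span R (c '' {i | i < j₂})) :=
            Submodule.mem_map_of_mem this
          rw [Submodule.map_span] at h2
          refine Submodule.span_mono ?_ h2
          rintro _ ⟨_, ⟨i, hi, rfl⟩, rfl⟩
          exact ⟨toLex (Sum.inr i), Sum.Lex.inr_lt_inr_iff.mpr hi, hb_inr i⟩
        have h2 : f x - s (K.mkQ (f x)) ∈ K := by
          rw [← Submodule.Quotient.mk_eq_zero K, ← Submodule.mkQ_apply, map_sub, hsapp, sub_self]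
        have h3 : f x - s (K.mkQ (f x)) ∈ S := hKle j₂ h2
        have := Submodule.add_mem S h3 h1
        rwa [sub_add_cancel] at this

/-- `M.charpoly = (X - 1) ^ m` under the eigenvalue hypothesis. -/
lemma charpoly_eq_of_eigenvalues_one (m : ℕ) (M : Matrix (Fin m) (Fin m) ℤ)
    (heig : ∀ α : ℂ, ((M.map (fun z : ℤ => (z : ℂ))).charpoly).IsRoot α → α = 1) :
    M.charpoly = (Polynomial.X - 1) ^ m := by
  classical
  have hmap : (M.map (fun z : ℤ => (z : ℂ))).charpoly
      = M.charpoly.map (Int.castRingHom ℂ) := by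
    rw [← Matrix.charpoly_map]
    rfl
  set p := (M.map (fun z : ℤ => (z : ℂ))).charpoly with hp
  have hmonic : p.Monic := Matrix.charpoly_monic _
  have hdeg : p.natDegree = m := by
    rw [hp, Matrix.charpoly_natDegree_eq_dim, Fintype.card_fin]
  have hsplits : p.Splits := IsAlgClosed.splits p
  have hroots : p.roots = Multiset.replicate m 1 := by
    apply Multiset.eq_replicate.mpr
    constructor
    · rw [← hdeg]
      exact (Polynomial.splits_iff_card_roots.mp hsplits)
    · intro a ha
      exact heig a (Polynomial.isRoot_of_mem_roots ha)
  have hpeq : p = (Polynomial.X - 1) ^ m := by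
    have := hsplits.eq_prod_roots_of_monic hmonic
    rw [hroots] at this
    rw [this, Multiset.map_replicate, Multiset.prod_replicate, Polynomial.C_1]
  have hcast : Function.Injective (Polynomial.map (Int.castRingHom ℂ)) :=
    Polynomial.map_injective _ Int.cast_injective
  apply hcast
  rw [← hmap, hpeq]
  simp [Polynomial.map_pow, Polynomial.map_sub]

/-- An automorphism of `ℤ^m` all of whose complex eigenvalues equal `1` is upper
unitriangular with respect to some `ℤ`-basis: the matrix is conjugate in `GL(m, ℤ)`
to an upper triangular matrix with all diagonal entries `1`. -/
theorem unipotent_integer_matrix_triangularizable (m : ℕ)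
    (M : Matrix (Fin m) (Fin m) ℤ) (hM : IsUnit M.det)
    (heig : ∀ α : ℂ,
      ((M.map (fun z : ℤ => (z : ℂ))).charpoly).IsRoot α → α = 1) :
    ∃ P : Matrix (Fin m) (Fin m) ℤ, IsUnit P.det ∧
      (∀ i j : Fin m, j < i → (P⁻¹ * M * P) i j = 0) ∧
      (∀ i : Fin m, (P⁻¹ * M * P) i i = 1) := by
  classical
  -- characteristic polynomial and nilpotency of N = M - 1
  have hcp : M.charpoly = (Polynomial.X - 1) ^ m := charpoly_eq_of_eigenvalues_one m M heig
  set N : Matrix (Fin m) (Fin m) ℤ := M - 1 with hNdef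
  have hNpow : N ^ m = 0 := by
    have := Matrix.aeval_self_charpoly M
    rw [hcp] at this
    simpa [hNdef] using this
  -- pass to linear maps
  set e : Module.Basis (Fin m) ℤ (Fin m → ℤ) := Pi.basisFun ℤ (Fin m) with hedef
  set g : (Fin m → ℤ) →ₗ[ℤ] (Fin m → ℤ) := Matrix.toLin e e N with hgdef
  have hgpow : g ^ m = 0 := by
    rw [hgdef]
    have : Matrix.toLin e e N = Matrix.toLinAlgEquiv e N := rfl
    rw [this, ← map_pow, hNpow, map_zero]
  obtain ⟨ι, _, _, b1, hb1⟩ := nilpotent_exists_triangular_basis ℤ m (Fin m → ℤ) g hgpow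
  -- reindex by Fin m
  have hcard : Fintype.card ι = m := by
    rw [← Module.finrank_eq_card_basis b1, Module.finrank_fintype_fun_eq_card, Fintype.card_fin]
  let eo : Fin m ≃o ι := monoEquivOfFin ι hcard
  let b : Module.Basis (Fin m) ℤ (Fin m → ℤ) := b1.reindex eo.symm.toEquiv
  have hb : ∀ j : Fin m, g (b j) ∈ Submodule.span ℤ (b '' {i | i < j}) := by
    intro j
    have hbj : b j = b1 (eo j) := by
      simp [b, Module.Basis.reindex_apply]
    have himg : b '' {i | i < j} = b1 '' {i | i < eo j} := by
      ext v
      constructor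
      · rintro ⟨i, hi, rfl⟩
        exact ⟨eo i, by simpa using hi, by simp [b, Module.Basis.reindex_apply]⟩
      · rintro ⟨i, hi, rfl⟩
        refine ⟨eo.symm i, ?_, by simp [b, Module.Basis.reindex_apply]⟩
        have : eo.symm i < eo.symm (eo j) := eo.symm.strictMono hi
        simpa using this
    rw [hbj, himg]
    exact hb1 (eo j)
  -- the change-of-basis matrix
  set P : Matrix (Fin m) (Fin m) ℤ := e.toMatrix b with hPdef
  haveI := e.invertibleToMatrix b
  have hPunit : IsUnit P.det := (Matrix.isUnit_iff_isUnit_det P).mp (isUnit_of_invertible P)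
  set f : (Fin m → ℤ) →ₗ[ℤ] (Fin m → ℤ) := Matrix.toLin e e M with hfdef
  set T : Matrix (Fin m) (Fin m) ℤ := LinearMap.toMatrix b b f with hTdef
  have hMP : M * P = P * T := by
    rw [hPdef, hTdef, hfdef]
    rw [basis_toMatrix_mul_linearMap_toMatrix]
    have : M = LinearMap.toMatrix e e (Matrix.toLin e e M) := (LinearMap.toMatrix_toLin e e M).symm
    conv_lhs => rw [this]
    rw [linearMap_toMatrix_mul_basis_toMatrix]
  have hconj : P⁻¹ * M * P = T := by
    rw [Matrix.mul_assoc, hMP, ← Matrix.mul_assoc, Matrix.nonsing_inv_mul P hPunit, Matrix.one_mul]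
  -- decompose f = g + id
  have hfg : f = g + LinearMap.id := by
    rw [hfdef, hgdef, hNdef, map_sub, Matrix.toLin_one]
    abel
  have hT0 : ∀ i j : Fin m, ¬ i < j → (LinearMap.toMatrix b b g) i j = 0 := by
    intro i j hij
    rw [LinearMap.toMatrix_apply]
    have hsupp := (b.mem_span_image).mp (hb j)
    by_contra h
    exact hij (hsupp (Finsupp.mem_support_iff.mpr h))
  have hTsum : T = LinearMap.toMatrix b b g + 1 := by
    rw [hTdef, hfg, map_add, LinearMap.toMatrix_id]
  refine ⟨P, hPunit, ?_, ?_⟩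
  · intro i j hji
    rw [hconj, hTsum, Matrix.add_apply, hT0 i j (lt_asymm hji),
      Matrix.one_apply_ne (ne_of_gt hji), add_zero]
  · intro i
    rw [hconj, hTsum, Matrix.add_apply, hT0 i i (lt_irrefl i),
      Matrix.one_apply_eq, zero_add]
end
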